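/- arXiv:2106.08487 — 8 statements merged into one kernel-verified Lean document; each statement's English description precedes it below -/
import Mathlib

section
/- If F is a spanning incoming forest of a directed graph H in which the vertex ℓ has no outgoing edges, and some connected component of F contains both vertices k and ℓ (with k ≠ ℓ), then F contains a directed path from k to ℓ. -/
open scoped Classical

variable {V : Type*} [Fintype V] [DecidableEq V]

/-- Number of edges of `F` outgoing from `v`. -/
def outDeg (F : Finset (V × V)) (v : V) : ℕ := (F.filter fun e => e.1 = v).card

/-- The underlying undirected (simple) graph of a set of directed edges. -/
def undirAdj (F : Finset (V × V)) : SimpleGraph V :=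
  SimpleGraph.fromRel fun a b => (a, b) ∈ F

/-- `F` is an incoming forest: its underlying undirected graph is acyclic and
every vertex has at most one outgoing edge. -/
def IsIncomingForest (F : Finset (V × V)) : Prop :=
  (undirAdj F).IsAcyclic ∧ ∀ v : V, outDeg F v ≤ 1

/-! Induct along an undirected path `x — y — ⋯ — ℓ`, assuming `y` already reaches the sink `ℓ`
by a directed path. If the first edge is `y → x`, then `y ≠ ℓ`, so the directed path from `y`
starts with the only edge out of `y`, which is `y → x`; hence `x` reaches `ℓ` too. -/

theorem Relation.ReflTransGen.of_symmGen_of_functional {α : Type*} {r : α → α → Prop}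
    {a b : α} (hr : ∀ x y z, r x y → r x z → y = z) (hb : ∀ y, ¬ r b y)
    (h : ReflTransGen (SymmGen r) a b) : ReflTransGen r a b := by
  induction h using ReflTransGen.head_induction_on with
  | refl => exact .refl
  | @head x y hxy _ ih =>
    rcases hxy with hxy | hyx
    · exact ih.head hxy
    · rcases ih.cases_head with rfl | ⟨z, hyz, hzb⟩
      · exact absurd hyx (hb x)
      · rwa [hr y z x hyz hyx] at hzb

theorem eq_of_mem_of_outDeg_le_one {α : Type*} [DecidableEq α] {F : Finset (α × α)} {v a b : α}
    (hv : outDeg F v ≤ 1) (ha : (v, a) ∈ F) (hb : (v, b) ∈ F) : a = b := by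
  have := Finset.card_le_one.mp hv (v, a) (by simp [ha]) (v, b) (by simp [hb])
  exact (Prod.mk.inj this).2

theorem SimpleGraph.Reachable.reflTransGen_symmGen_of_undirAdj {α : Type*} {F : Finset (α × α)}
    {a b : α} (h : (undirAdj F).Reachable a b) :
    Relation.ReflTransGen (Relation.SymmGen fun x y => (x, y) ∈ F) a b :=
  Relation.ReflTransGen.mono (fun _ _ hxy => ((SimpleGraph.fromRel_adj _ _ _).mp hxy).2) a b
    ((SimpleGraph.reachable_iff_reflTransGen a b).mp h)

theorem forest_contains_path_to_sink_general
    (E F : Finset (V × V)) (ℓ : V) (hℓ : ∀ e ∈ E, e.1 ≠ ℓ)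
    (hFE : F ⊆ E) (hF : IsIncomingForest F)
    (k : V) (hreach : (undirAdj F).Reachable k ℓ) :
    Relation.ReflTransGen (fun a b => (a, b) ∈ F) k ℓ :=
  hreach.reflTransGen_symmGen_of_undirAdj.of_symmGen_of_functional
    (fun x _ _ hy hz => eq_of_mem_of_outDeg_le_one (hF.2 x) hy hz)
    (fun _ hy => hℓ _ (hFE hy) rfl)

/-- If `F` is a spanning incoming forest of a directed graph with edge set `E`
in which `ℓ` has no outgoing edges, and some connected component of `F`
contains both `k` and `ℓ` (with `k ≠ ℓ`), then `F` contains a directed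
path from `k` to `ℓ`. -/
theorem forest_contains_path_to_sink
    (E F : Finset (V × V)) (ℓ : V) (hℓ : ∀ e ∈ E, e.1 ≠ ℓ)
    (hFE : F ⊆ E) (hF : IsIncomingForest F)
    (k : V) (hk : k ≠ ℓ) (hreach : (undirAdj F).Reachable k ℓ) :
    Relation.ReflTransGen (fun a b => (a, b) ∈ F) k ℓ :=
  forest_contains_path_to_sink_general E F ℓ hℓ hFE hF k hreach
end

section
/- Let H be a finite directed graph with distinct vertices k and ℓ, where ℓ has no outgoing edges in H, and let j be a positive integer. Let K be obtained from H by removing all edges outgoing from k. Then the set of j-edge spanning incoming forests of H in which k and ℓ lie in the same connected component equals the union, over all edges k → i of H, of the sets obtained by adding the edge k → i to a (j−1)-edge spanning incoming forest of K in which i and ℓ lie in the same connected component. -/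
open scoped Classical

variable {V : Type*} [Fintype V] [DecidableEq V]

/-- `SIF E j k ℓ` is the set of `j`-edge spanning incoming forests of the
directed graph with edge set `E` in which `k` and `ℓ` lie in the same
connected component of the underlying undirected graph. -/
def SIF (E : Finset (V × V)) (j : ℕ) (k ℓ : V) : Set (Finset (V × V)) :=
  {F | F ⊆ E ∧ F.card = j ∧ IsIncomingForest F ∧ (undirAdj F).Reachable k ℓ}

/-!
Proof. In a digraph where every vertex has out-degree at most one, an undirected path ending at
a sink can be followed along the edge directions, so every connected component contains at most
one sink. If `F'` is a forest in which `k` reaches the sink `ℓ`, then `k` is not a sink; removing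
its unique out-edge `k → i` makes `k` a sink, so `ℓ` must lie in the component of `i`.
Conversely, in a forest of `K` linking `i` to `ℓ` the sink `k` is not linked to `i`, so adding
`k → i` creates no cycle and keeps all out-degrees at most one.
-/

section

open SimpleGraph

variable {α : Type*}

theorem SimpleGraph.reachable_sup_edge {G : SimpleGraph α} {u v x y : α}
    (h : (G ⊔ edge u v).Reachable x y) :
    G.Reachable x y ∨ G.Reachable x u ∧ G.Reachable v y ∨
      G.Reachable x v ∧ G.Reachable u y := by
  rw [reachable_iff_reflTransGen] at h
  induction h with
  | refl => exact Or.inl .rfl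
  | @tail b c _ hbc ih =>
    rcases hbc with hG | hedge
    · have hbc := hG.reachable
      rcases ih with hb | ⟨hu, hb⟩ | ⟨hv, hb⟩
      exacts [Or.inl (hb.trans hbc), Or.inr (Or.inl ⟨hu, hb.trans hbc⟩),
        Or.inr (Or.inr ⟨hv, hb.trans hbc⟩)]
    · rw [edge_adj] at hedge
      rcases hedge.1 with ⟨rfl, rfl⟩ | ⟨rfl, rfl⟩ <;>
        rcases ih with hb | ⟨hu, hb⟩ | ⟨hv, hb⟩
      exacts [Or.inr (Or.inl ⟨hb, .rfl⟩), Or.inr (Or.inl ⟨hu, .rfl⟩), Or.inl hv,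
        Or.inr (Or.inr ⟨hb, .rfl⟩), Or.inl hu, Or.inr (Or.inr ⟨hv, .rfl⟩)]

variable [DecidableEq α]

theorem undirAdj_insert (F : Finset (α × α)) (u v : α) :
    undirAdj (insert (u, v) F) = undirAdj F ⊔ edge u v := by
  ext a b
  simp only [undirAdj, fromRel_adj, sup_adj, edge_adj,
    Finset.mem_insert, Prod.mk.injEq]
  tauto

theorem eq_of_outDeg_le_one {F : Finset (α × α)} {a b c : α} (ha : outDeg F a ≤ 1)
    (hb : (a, b) ∈ F) (hc : (a, c) ∈ F) : b = c :=
  congrArg Prod.snd <| Finset.card_le_one.mp ha _ (Finset.mem_filter.mpr ⟨hb, rfl⟩) _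
    (Finset.mem_filter.mpr ⟨hc, rfl⟩)

theorem reflTransGen_of_reachable_sink {F : Finset (α × α)} (hout : ∀ v, outDeg F v ≤ 1)
    {x y : α} (hy : ∀ z, (y, z) ∉ F) (h : (undirAdj F).Reachable x y) :
    Relation.ReflTransGen (fun a b => (a, b) ∈ F) x y := by
  obtain ⟨w⟩ := h
  induction w with
  | nil => exact .refl
  | @cons a b _ hab _ ih =>
    obtain ⟨-, hforward | hbackward⟩ := fromRel_adj _ _ _ |>.mp hab
    · exact (ih hy).head hforward
    · rcases (ih hy).cases_head with rfl | ⟨c, hbc, hcy⟩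
      · exact absurd hbackward (hy a)
      · rwa [eq_of_outDeg_le_one (hout b) hbc hbackward] at hcy

theorem eq_of_reachable_of_sinks {F : Finset (α × α)} (hout : ∀ v, outDeg F v ≤ 1)
    {x y : α} (hx : ∀ z, (x, z) ∉ F) (hy : ∀ z, (y, z) ∉ F)
    (h : (undirAdj F).Reachable x y) :
    x = y :=
  (reflTransGen_of_reachable_sink hout hy h).cases_head.resolve_right
    fun ⟨z, hxz, _⟩ => hx z hxz

theorem IsIncomingForest.anti {F F' : Finset (α × α)} (h : F ⊆ F')
    (hF' : IsIncomingForest F') :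
    IsIncomingForest F := by
  refine ⟨hF'.1.anti fun a b hab => ?_, fun v => ?_⟩
  · rw [undirAdj, fromRel_adj] at hab ⊢
    exact ⟨hab.1, hab.2.imp (@h _) (@h _)⟩
  · exact (Finset.card_le_card (Finset.filter_subset_filter _ h)).trans (hF'.2 v)

theorem outDeg_insert_of_sink {F : Finset (α × α)} {u : α} (hu : ∀ z, (u, z) ∉ F)
    (v w : α) :
    outDeg (insert (u, v) F) w = if w = u then 1 else outDeg F w := by
  rw [outDeg, Finset.filter_insert]
  split_ifs with h₁ h₂ h₂
  · rw [Finset.card_insert_of_notMem fun h => hu v (Finset.mem_filter.mp h).1,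
      Finset.card_eq_zero.mpr (Finset.filter_eq_empty_iff.mpr ?_)]
    rintro ⟨a, b⟩ he rfl
    exact hu b (h₂ ▸ he)
  · exact absurd h₁.symm h₂
  · exact absurd h₂.symm h₁
  · rfl

theorem IsIncomingForest.insert_of_sink {F : Finset (α × α)} (hF : IsIncomingForest F)
    {u v : α} (hu : ∀ z, (u, z) ∉ F) (huv : ¬(undirAdj F).Reachable u v) :
    IsIncomingForest (insert (u, v) F) := by
  refine ⟨undirAdj_insert F u v ▸ hF.1.sup_edge_of_not_reachable huv, fun w => ?_⟩
  rw [outDeg_insert_of_sink hu]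
  split_ifs
  exacts [le_rfl, hF.2 w]

variable {E : Finset (α × α)} {k ℓ : α}

theorem exists_eq_insert_of_mem_SIF (hkl : k ≠ ℓ) (hℓ : ∀ e ∈ E, e.1 ≠ ℓ) {j : ℕ}
    {F' : Finset (α × α)} (hF' : F' ∈ SIF E j k ℓ) :
    ∃ i, (k, i) ∈ E ∧
      ∃ F ∈ SIF (E.filter fun e => e.1 ≠ k) (j - 1) i ℓ, F' = insert (k, i) F := by
  obtain ⟨hF'E, hcard, hforest, hreach⟩ := hF'
  have hℓF' : ∀ z, (ℓ, z) ∉ F' := fun z h => hℓ _ (hF'E h) rfl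
  obtain ⟨i, hki⟩ : ∃ i, (k, i) ∈ F' := by
    by_contra! hk
    exact hkl (eq_of_reachable_of_sinks hforest.2 hk hℓF' hreach)
  set F := F'.erase (k, i)
  have hkF : ∀ z, (k, z) ∉ F := fun z h => by
    obtain ⟨hne, hz⟩ := Finset.mem_erase.mp h
    exact hne (by rw [eq_of_outDeg_le_one (hforest.2 k) hz hki])
  have hℓF : ∀ z, (ℓ, z) ∉ F := fun z h => hℓF' z (Finset.mem_of_mem_erase h)
  have hFforest : IsIncomingForest F := hforest.anti (Finset.erase_subset _ _)
  have hF'_eq : F' = insert (k, i) F := (Finset.insert_erase hki).symm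
  have hnkℓ : ¬(undirAdj F).Reachable k ℓ := fun h =>
    hkl (eq_of_reachable_of_sinks hFforest.2 hkF hℓF h)
  refine ⟨i, hF'E hki, F, ⟨fun e he => ?_, ?_, hFforest, ?_⟩, hF'_eq⟩
  · exact Finset.mem_filter.mpr
      ⟨hF'E (Finset.mem_of_mem_erase he), fun h => hkF e.2 (h ▸ he)⟩
  · rw [Finset.card_erase_of_mem hki, hcard]
  · rw [hF'_eq, undirAdj_insert] at hreach
    rcases reachable_sup_edge hreach with h | ⟨-, h⟩ | ⟨-, h⟩
    exacts [absurd h hnkℓ, h, absurd h hnkℓ]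

theorem insert_mem_SIF (hkl : k ≠ ℓ) (hℓ : ∀ e ∈ E, e.1 ≠ ℓ) {j : ℕ} (hj : 1 ≤ j)
    {i : α} (hki : (k, i) ∈ E) {F : Finset (α × α)}
    (hF : F ∈ SIF (E.filter fun e => e.1 ≠ k) (j - 1) i ℓ) :
    insert (k, i) F ∈ SIF E j k ℓ := by
  obtain ⟨hFK, hcard, hforest, hreach⟩ := hF
  have hFE : F ⊆ E := hFK.trans (Finset.filter_subset _ _)
  have hkF : ∀ z, (k, z) ∉ F := fun z h => (Finset.mem_filter.mp (hFK h)).2 rfl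
  have hℓF : ∀ z, (ℓ, z) ∉ F := fun z h => hℓ _ (hFE h) rfl
  have hnki : ¬(undirAdj F).Reachable k i := fun h =>
    hkl (eq_of_reachable_of_sinks hforest.2 hkF hℓF (h.trans hreach))
  refine ⟨Finset.insert_subset hki hFE, ?_, hforest.insert_of_sink hkF hnki, ?_⟩
  · rw [Finset.card_insert_of_notMem (hkF i), hcard]
    omega
  · rw [undirAdj_insert]
    have hadj : (edge k i).Adj k i :=
      (edge_adj _ _ _ _).mpr ⟨Or.inl ⟨rfl, rfl⟩, fun h => hnki (h ▸ .rfl)⟩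
    exact (Adj.reachable (Or.inr hadj)).trans (hreach.mono le_sup_left)

end

/-- The `j`-edge spanning incoming forests of `H` (edge set `E`) in which `k`
and `ℓ` lie in the same connected component are exactly the graphs obtained by
adding an edge `k → i` of `H` to a `(j-1)`-edge spanning incoming forest of
`K` (obtained from `H` by removing the edges outgoing from `k`) in which `i`
and `ℓ` lie in the same connected component. -/
theorem forests_as_union
    (E : Finset (V × V)) (k ℓ : V) (hkl : k ≠ ℓ)
    (hℓ : ∀ e ∈ E, e.1 ≠ ℓ) (j : ℕ) (hj : 1 ≤ j) :
    SIF E j k ℓ =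
      {F' | ∃ i : V, (k, i) ∈ E ∧
        ∃ F ∈ SIF (E.filter fun e => e.1 ≠ k) (j - 1) i ℓ, F' = insert (k, i) F} := by
  ext F'
  constructor
  · exact exists_eq_insert_of_mem_SIF hkl hℓ
  · rintro ⟨i, hki, F, hF, rfl⟩
    exact insert_mem_SIF hkl hℓ hj hki hF
end

section
/- Let A be an n×n matrix over a commutative ring, let λ be an indeterminate, and let A*_1 be the matrix obtained from A by replacing the first column by zeros. For distinct indices i, j with i ≠ 1 and j ≠ 1, the determinant of the matrix obtained from λI − A by deleting rows {1, i} and columns {1, j} equals λ^{−1} times the determinant of the matrix obtained from λI − A*_1 by deleting row i and column j; equivalently, det((λI − A*_1)^{i,j}) = λ · det((λI − A)^{\{1,i\},\{1,j\}}). -/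
open Polynomial

/-! Zeroing the first column of `A` makes the first column of `λI - A*₁` equal to `λ e₁`, and
this survives deleting row `i ≠ 1` and column `j ≠ 1`. Expanding the resulting minor along that
column leaves `λ` times the minor with row `1` and column `1` also removed, and away from the first
column `λI - A*₁` agrees with `λI - A`. -/

namespace Matrix

variable {R : Type*} [CommRing R]

theorem det_eq_mul_det_submatrix_succ_of_col_zero {n : ℕ}
    (M : Matrix (Fin (n + 1)) (Fin (n + 1)) R) (hM : ∀ k : Fin n, M k.succ 0 = 0) :
    M.det = M 0 0 * (M.submatrix Fin.succ Fin.succ).det := by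
  rw [det_succ_column_zero, Fin.sum_univ_succ]
  simp [hM]

variable {n : Type*} [Fintype n] [DecidableEq n]

theorem charmatrix_updateCol_apply_of_ne (A : Matrix n n R) (c : n → R) {j l : n} (hl : l ≠ j)
    (k : n) : charmatrix (A.updateCol j c) k l = charmatrix A k l := by
  simp [charmatrix_apply, updateCol_ne hl]

theorem charmatrix_updateCol_zero_apply_self (A : Matrix n n R) (j : n) :
    charmatrix (A.updateCol j fun _ => 0) j j = X := by
  simp

theorem charmatrix_updateCol_zero_apply_of_ne (A : Matrix n n R) {j k : n} (hk : k ≠ j) :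
    charmatrix (A.updateCol j fun _ => 0) k j = 0 := by
  simp [hk]

end Matrix

theorem det_remove_two_rows_cols_general {R : Type*} [CommRing R] (m : ℕ)
    (A : Matrix (Fin (m + 2)) (Fin (m + 2)) R) (i' j' : Fin (m + 1)) :
    ((Matrix.charmatrix (A.updateCol 0 (fun _ => 0))).submatrix
        i'.succ.succAbove j'.succ.succAbove).det
      = Polynomial.X *
        (((Matrix.charmatrix A).submatrix Fin.succ Fin.succ).submatrix
          i'.succAbove j'.succAbove).det := by
  rw [Matrix.det_eq_mul_det_submatrix_succ_of_col_zero]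
  · simp only [Matrix.submatrix_apply, Fin.succ_succAbove_zero]
    rw [Matrix.charmatrix_updateCol_zero_apply_self A 0]
    congr 2
    ext a b : 1
    simp only [Matrix.submatrix_apply, Fin.succ_succAbove_succ]
    exact Matrix.charmatrix_updateCol_apply_of_ne A _ (Fin.succ_ne_zero _) _
  · intro k
    simp only [Matrix.submatrix_apply, Fin.succ_succAbove_zero, Fin.succ_succAbove_succ]
    exact Matrix.charmatrix_updateCol_zero_apply_of_ne A (Fin.succ_ne_zero _)

/-- Deleting rows `{1, i}` and columns `{1, j}` (here `0`-indexed: rows `{0, i'.succ}`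
and columns `{0, j'.succ}`) from `λI - A` gives a determinant equal to `λ⁻¹` times
the determinant of `λI - A*₁` with row `i` and column `j` deleted, where `A*₁` is `A`
with its first column replaced by zeros; equivalently,
`det((λI - A*₁)^{i,j}) = λ · det((λI - A)^{{1,i},{1,j}})`. -/
theorem det_remove_two_rows_cols {R : Type*} [CommRing R] (m : ℕ)
    (A : Matrix (Fin (m + 2)) (Fin (m + 2)) R) (i' j' : Fin (m + 1)) (hij : i' ≠ j') :
    ((Matrix.charmatrix (A.updateCol 0 (fun _ => 0))).submatrix
        i'.succ.succAbove j'.succ.succAbove).det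
      = Polynomial.X *
        (((Matrix.charmatrix A).submatrix Fin.succ Fin.succ).submatrix
          i'.succAbove j'.succAbove).det :=
  det_remove_two_rows_cols_general m A i' j'
end

section
/- Let M = (G, In, Out, Leak) be a linear compartmental model with In = Out = {1}. For every positive integer j, the sum of productivities of j-edge spanning incoming forests of the graph Ḡ*_1 (obtained from the leak-augmented graph Ḡ by removing all edges outgoing from node 1) equals the sum of productivities of j-edge spanning incoming forests of the graph Ḡ_1 (obtained from Ḡ*_1 by redirecting every edge j → 1 to j → 0 with the same label and deleting node 1). -/
/-!
If every vertex emits at most one edge of `F`, then every vertex on an undirected cycle of `F`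
emits an edge, so whether `F` is acyclic depends only on its edges between emitting vertices.
In `Ḡ*₁` neither compartment `1` nor the leak node emits an edge; hence redirecting the edges
into `1` towards the leak node keeps these inner edges, and cannot raise an out-degree. The two
sums therefore run over the same edge sets.
-/

open scoped Classical

variable {V : Type*} [Fintype V] [DecidableEq V]

theorem SimpleGraph.Walk.IsCycle.mem_tail_support {α : Type*} {G : SimpleGraph α} {u w : α}
    {c : G.Walk u u} (hc : c.IsCycle) (hw : w ∈ c.support) : w ∈ c.support.tail := by
  rcases c.mem_support_iff.1 hw with rfl | h
  · exact c.end_mem_tail_support hc.not_nil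
  · exact h

theorem SimpleGraph.Walk.IsCycle.card_toFinset_tail_support {α : Type*} [DecidableEq α]
    {G : SimpleGraph α} {u : α} {c : G.Walk u u} (hc : c.IsCycle) :
    c.support.tail.toFinset.card = c.length := by
  rw [List.toFinset_card_of_nodup hc.support_nodup, List.length_tail, c.length_support,
    Nat.add_sub_cancel]

theorem undirAdj_mono {α : Type*} {F F' : Finset (α × α)} (h : F ⊆ F') :
    undirAdj F ≤ undirAdj F' := fun x y hxy => by
  rw [undirAdj, SimpleGraph.fromRel_adj] at hxy ⊢
  exact ⟨hxy.1, hxy.2.imp (@h _) (@h _)⟩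

section

variable {α : Type*} [DecidableEq α]

theorem eq_of_fst_eq_of_outDeg_le_one {F : Finset (α × α)} {v : α} (hv : outDeg F v ≤ 1)
    {p q : α × α} (hp : p ∈ F) (hq : q ∈ F) (hpv : p.1 = v) (hqv : q.1 = v) : p = q :=
  Finset.card_le_one.1 hv p (Finset.mem_filter.2 ⟨hp, hpv⟩) q (Finset.mem_filter.2 ⟨hq, hqv⟩)

/-- Each edge of the cycle is oriented in `F` away from one of its endpoints, and these
sources are distinct; so the `c.length` vertices of the cycle emit `c.length` edges. -/
theorem mem_image_fst_of_mem_support_of_isCycle {F : Finset (α × α)}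
    (hF : ∀ v, outDeg F v ≤ 1) {u w : α} {c : (undirAdj F).Walk u u} (hc : c.IsCycle)
    (hw : w ∈ c.support) : w ∈ F.image Prod.fst := by
  by_contra hw_sink
  set P := F.filter fun p => s(p.1, p.2) ∈ c.edges
  have hlength_le : c.length ≤ P.card := by
    calc c.length = c.edges.toFinset.card := by
          rw [List.toFinset_card_of_nodup hc.edges_nodup, c.length_edges]
      _ ≤ (P.image fun p => s(p.1, p.2)).card := by
          refine Finset.card_le_card fun e he => ?_
          rw [List.mem_toFinset] at he
          have hadj := c.edges_subset_edgeSet he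
          induction e with
          | _ x y =>
            rcases ((undirAdj F).mem_edgeSet.1 hadj).2 with hxy | hyx
            · exact Finset.mem_image.2 ⟨(x, y), Finset.mem_filter.2 ⟨hxy, he⟩, rfl⟩
            · exact Finset.mem_image.2
                ⟨(y, x), Finset.mem_filter.2 ⟨hyx, Sym2.eq_swap ▸ he⟩, Sym2.eq_swap⟩
      _ ≤ P.card := Finset.card_image_le
  have hcard_le : P.card ≤ c.length - 1 := by
    calc P.card = (P.image Prod.fst).card := by
          refine (Finset.card_image_of_injOn fun p hp q hq hpq => ?_).symm
          exact eq_of_fst_eq_of_outDeg_le_one (hF p.1) (Finset.mem_filter.1 hp).1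
            (Finset.mem_filter.1 hq).1 rfl hpq.symm
      _ ≤ (c.support.tail.toFinset.erase w).card := by
          refine Finset.card_le_card fun v hv => ?_
          obtain ⟨p, hp, rfl⟩ := Finset.mem_image.1 hv
          obtain ⟨hpF, hpc⟩ := Finset.mem_filter.1 hp
          refine Finset.mem_erase.2 ⟨fun h => hw_sink (Finset.mem_image.2 ⟨p, hpF, h⟩), ?_⟩
          exact List.mem_toFinset.2 (hc.mem_tail_support (c.fst_mem_support_of_mem_edges hpc))
      _ = c.length - 1 := by
          rw [Finset.card_erase_of_mem (List.mem_toFinset.2 (hc.mem_tail_support hw)),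
            hc.card_toFinset_tail_support]
  have := hc.three_le_length
  omega

def innerEdges (F : Finset (α × α)) : Finset (α × α) :=
  F.filter fun e => e.2 ∈ F.image Prod.fst

theorem isAcyclic_undirAdj_iff_innerEdges {F : Finset (α × α)} (hF : ∀ v, outDeg F v ≤ 1) :
    (undirAdj F).IsAcyclic ↔ (undirAdj (innerEdges F)).IsAcyclic := by
  refine ⟨fun h => h.anti (undirAdj_mono (Finset.filter_subset _ _)), fun h u c hc => ?_⟩
  have hinner : ∀ e ∈ c.edges, e ∈ (undirAdj (innerEdges F)).edgeSet := by
    intro e he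
    have hadj := c.edges_subset_edgeSet he
    induction e with
    | _ x y =>
      have hx := mem_image_fst_of_mem_support_of_isCycle hF hc (c.fst_mem_support_of_mem_edges he)
      have hy := mem_image_fst_of_mem_support_of_isCycle hF hc (c.snd_mem_support_of_mem_edges he)
      rw [SimpleGraph.mem_edgeSet, undirAdj, SimpleGraph.fromRel_adj] at hadj ⊢
      exact ⟨hadj.1, hadj.2.imp (fun hxy => Finset.mem_filter.2 ⟨hxy, hy⟩)
        (fun hyx => Finset.mem_filter.2 ⟨hyx, hx⟩)⟩
  exact h (c.transfer _ hinner) (hc.transfer hinner)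

def redirect (a b : α) (e : α × α) : α × α := if e.2 = a then (e.1, b) else e

theorem fst_redirect (a b : α) (e : α × α) : (redirect a b e).1 = e.1 := by
  unfold redirect; split_ifs <;> rfl

theorem outDeg_image_le {F : Finset (α × α)} {f : α × α → α × α} (hf : ∀ e, (f e).1 = e.1)
    (v : α) : outDeg (F.image f) v ≤ outDeg F v := by
  rw [outDeg, outDeg, Finset.filter_image]
  simp only [hf]
  exact Finset.card_image_le

theorem innerEdges_image_redirect {F : Finset (α × α)} {a b : α} (ha : a ∉ F.image Prod.fst)
    (hb : b ∉ F.image Prod.fst) : innerEdges (F.image (redirect a b)) = innerEdges F := by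
  have hsrc : (F.image (redirect a b)).image Prod.fst = F.image Prod.fst := by
    rw [Finset.image_image]; exact Finset.image_congr fun e _ => fst_redirect a b e
  ext ⟨x, y⟩
  simp only [innerEdges, Finset.mem_filter, hsrc]
  refine ⟨fun ⟨hxy, hy⟩ => ⟨?_, hy⟩, fun ⟨hxy, hy⟩ => ⟨?_, hy⟩⟩
  · obtain ⟨e, he, hexy⟩ := Finset.mem_image.1 hxy
    unfold redirect at hexy
    split_ifs at hexy
    · obtain rfl : b = y := congrArg Prod.snd hexy
      exact absurd hy hb
    · exact hexy ▸ he
  · have hya : y ≠ a := fun h => ha (h ▸ hy)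
    exact Finset.mem_image.2 ⟨(x, y), hxy, if_neg hya⟩

theorem isAcyclic_undirAdj_image_redirect_iff {F : Finset (α × α)} {a b : α}
    (hF : ∀ v, outDeg F v ≤ 1) (ha : a ∉ F.image Prod.fst) (hb : b ∉ F.image Prod.fst) :
    (undirAdj (F.image (redirect a b))).IsAcyclic ↔ (undirAdj F).IsAcyclic := by
  have hF' v := (outDeg_image_le (F := F) (fst_redirect a b) v).trans (hF v)
  rw [isAcyclic_undirAdj_iff_innerEdges hF, isAcyclic_undirAdj_iff_innerEdges hF',
    innerEdges_image_redirect ha hb]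

end

/-- Compartment `1` is `i1`; the leak node `0` of `Ḡ` is `none`. -/
theorem flip_forest_sum_general {R : Type*} [CommRing R] (n : ℕ) (i1 : Fin n)
    (Etilde : Finset (Option (Fin n) × Option (Fin n)))
    (hE : ∀ e ∈ Etilde,
      (∃ s t : Fin n, s ≠ t ∧ e = (some s, some t)) ∨ ∃ s : Fin n, e = (some s, none))
    (L : Option (Fin n) × Option (Fin n) → R) (j : ℕ) :
    ∑ F ∈ ((Etilde.filter fun e => e.1 ≠ some i1).powerset.filter fun F =>
        F.card = j ∧ IsIncomingForest F), ∏ e ∈ F, L e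
    = ∑ F ∈ ((Etilde.filter fun e => e.1 ≠ some i1).powerset.filter fun F =>
        F.card = j ∧ (∀ v, outDeg F v ≤ 1) ∧
          (undirAdj (F.image fun e => if e.2 = some i1 then (e.1, none) else e)).IsAcyclic),
        ∏ e ∈ F, L e := by
  refine Finset.sum_congr (Finset.filter_congr fun F hF => ?_) fun _ _ => rfl
  have hsub := Finset.mem_powerset.1 hF
  have hsrc : ∀ e ∈ F, e.1 ≠ some i1 ∧ e.1 ≠ none := fun e he => by
    obtain ⟨heE, hei1⟩ := Finset.mem_filter.1 (hsub he)
    refine ⟨hei1, ?_⟩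
    rcases hE e heE with ⟨s, t, -, rfl⟩ | ⟨s, rfl⟩ <;> simp
  have hi1 : some i1 ∉ F.image Prod.fst := fun h =>
    let ⟨e, he, he1⟩ := Finset.mem_image.1 h; (hsrc e he).1 he1
  have hleak : none ∉ F.image Prod.fst := fun h =>
    let ⟨e, he, he1⟩ := Finset.mem_image.1 h; (hsrc e he).2 he1
  refine and_congr_right fun _ => ?_
  rw [IsIncomingForest, and_comm]
  exact and_congr_right fun hF => (isAcyclic_undirAdj_image_redirect_iff hF hi1 hleak).symm

/-- For a linear compartmental model with `In = Out = {1}` (compartment `1` is `i1`;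
the leak node of the leak-augmented graph `Ḡ` is `none`), for every `j ≥ 1`, the sum
of productivities of `j`-edge spanning incoming forests of `Ḡ*₁` (obtained from `Ḡ`
by removing all edges outgoing from compartment `1`) equals the sum of productivities
of `j`-edge spanning incoming forests of `Ḡ₁` (obtained from `Ḡ*₁` by redirecting
every edge into compartment `1` to the leak node, keeping its label). -/
theorem flip_forest_sum {R : Type*} [CommRing R] (n : ℕ) (i1 : Fin n)
    (Etilde : Finset (Option (Fin n) × Option (Fin n)))
    (hE : ∀ e ∈ Etilde,
      (∃ s t : Fin n, s ≠ t ∧ e = (some s, some t)) ∨ ∃ s : Fin n, e = (some s, none))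
    (L : Option (Fin n) × Option (Fin n) → R) (j : ℕ) (hj : 1 ≤ j) :
    ∑ F ∈ ((Etilde.filter fun e => e.1 ≠ some i1).powerset.filter fun F =>
        F.card = j ∧ IsIncomingForest F), ∏ e ∈ F, L e
    = ∑ F ∈ ((Etilde.filter fun e => e.1 ≠ some i1).powerset.filter fun F =>
        F.card = j ∧ (∀ v, outDeg F v ≤ 1) ∧
          (undirAdj (F.image fun e => if e.2 = some i1 then (e.1, none) else e)).IsAcyclic),
        ∏ e ∈ F, L e :=
  flip_forest_sum_general n i1 Etilde hE L j
end

section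
/- Let M = (G, {j}, {i}, Leak) be a strongly connected linear compartmental model with n compartments, one input j, one output i, with j ≠ i. If L is the length of a shortest directed path in G from j to i, then in the polynomial det((λI − A)^{j,i}) = d_{n−1}λ^{n−1} + ⋯ + d_0 (up to global sign), the coefficients d_{n−1}, d_{n−2}, …, d_{n−L} all vanish, while d_{n−L−1}, …, d_0 are nonzero polynomials in the parameters. -/
/-!
Up to sign, the minor is the adjugate entry of `λ - A`: the determinant of `λ - A` with row `j`
replaced by `eᵢ`, whose expansion runs over the permutations `π` with `π i = j`. A term is nonzero only if every vertex
`c ≠ i` moved by `π` has an edge `c → π c`; the `π`-orbit of `j` is then a path to `i`, so `π`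
moves at least `L` vertices besides `i` and the term has degree at most `n - 1 - L`.

For `k ≤ n - 1 - L`, specialize the parameters to a spanning forest: a shortest path from `j` to
`i` and `n - 1 - L - k` further vertices, each with one edge along a shortest path towards `i`,
all labels `1` and no leaks. Only the cycle closing the path survives in the expansion, and the
minor becomes `±(λ + 1) ^ (n - 1 - L - k) * λ ^ k`.
-/

open scoped Classical

variable {V : Type*} [Fintype V] [DecidableEq V]

open Polynomial

/-- The compartmental matrix of a linear compartmental model with edge set `E`
(edge `(j,i)` means `j → i`, labeled `a i j`), leak set `Lk` (leak labels `a0`). -/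
def cmpMatrix {n : ℕ} {R : Type*} [CommRing R] (E : Finset (Fin n × Fin n))
    (Lk : Finset (Fin n)) (a : Fin n → Fin n → R) (a0 : Fin n → R) :
    Matrix (Fin n) (Fin n) R :=
  fun i j =>
    if i = j then
      -((if j ∈ Lk then a0 j else 0) + ∑ k ∈ Finset.univ.filter (fun k => (j, k) ∈ E), a k j)
    else if (j, i) ∈ E then a i j else 0

/-- The leak-augmented graph `Ḡ`: vertex `none` is the leak node `0`, and each
leak `ℓ` contributes an edge `ℓ → 0`. -/
def leakAug {n : ℕ} (E : Finset (Fin n × Fin n)) (Lk : Finset (Fin n)) :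
    Finset (Option (Fin n) × Option (Fin n)) :=
  E.image (fun e => (some e.1, some e.2)) ∪ Lk.image (fun l => (some l, none))

/-- Edge labels of the leak-augmented graph. -/
def Lab {n : ℕ} {R : Type*} [CommRing R] (a : Fin n → Fin n → R) (a0 : Fin n → R) :
    Option (Fin n) × Option (Fin n) → R
  | (some s, some t) => a t s
  | (some s, none) => a0 s
  | (none, _) => 0


/-- There is a directed path of length `L` from `u` to `v` in the graph with edge set `E`. -/
def DirPath {α : Type*} (E : Finset (α × α)) (u v : α) (L : ℕ) : Prop :=
  ∃ f : ℕ → α, f 0 = u ∧ f L = v ∧ ∀ t < L, (f t, f (t + 1)) ∈ E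

section

open Finset

section DirPath

variable {α : Type*} {E : Finset (α × α)} {u v : α}

lemma dirPath_zero_iff : DirPath E u v 0 ↔ u = v :=
  ⟨fun ⟨f, h0, hv, _⟩ => h0 ▸ hv, fun h => ⟨fun _ => u, rfl, h, by simp⟩⟩

lemma dirPath_succ_iff {ℓ : ℕ} :
    DirPath E u v (ℓ + 1) ↔ ∃ w, (u, w) ∈ E ∧ DirPath E w v ℓ := by
  constructor
  · rintro ⟨f, h0, hv, hE⟩
    exact ⟨f 1, h0 ▸ hE 0 ℓ.succ_pos, fun t => f (t + 1), rfl, hv,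
      fun t ht => hE (t + 1) (by omega)⟩
  · rintro ⟨w, huw, f, h0, hv, hE⟩
    refine ⟨fun | 0 => u | t + 1 => f t, rfl, hv, ?_⟩
    rintro (_ | t) ht
    · simpa [h0] using huw
    · exact hE t (by omega)

lemma exists_dirPath_of_reflTransGen
    (h : Relation.ReflTransGen (fun x y => (x, y) ∈ E) u v) : ∃ ℓ, DirPath E u v ℓ := by
  induction h using Relation.ReflTransGen.head_induction_on with
  | refl => exact ⟨0, dirPath_zero_iff.mpr rfl⟩
  | head huw _ ih =>
    obtain ⟨ℓ, hw⟩ := ih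
    exact ⟨ℓ + 1, dirPath_succ_iff.mpr ⟨_, huw, hw⟩⟩

/-- `d` is the distance to `v`, and `h w` the second vertex of a shortest path from `w` to `v`. -/
lemma exists_shortest_path_iterate {L : ℕ} (hsc : ∀ w, ∃ ℓ, DirPath E w v ℓ)
    (hL : DirPath E u v L) (hLmin : ∀ L' < L, ¬ DirPath E u v L') :
    ∃ (d : α → ℕ) (h : α → α), (∀ w, w ≠ v → (w, h w) ∈ E ∧ d (h w) < d w) ∧
      (∀ t < L, h^[t] u ≠ v) ∧ h^[L] u = v := by
  obtain ⟨d, hd_path, hd_min⟩ : ∃ d : α → ℕ,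
      (∀ w, DirPath E w v (d w)) ∧ ∀ w ℓ, DirPath E w v ℓ → d w ≤ ℓ := by
    classical
    exact ⟨fun w => Nat.find (hsc w), fun w => Nat.find_spec _, fun w _ => Nat.find_min' _⟩
  have hd_eq_zero {w} (hw : d w = 0) : w = v := dirPath_zero_iff.mp (hw ▸ hd_path w)
  have hstep (w) (hw : w ≠ v) : ∃ x, (w, x) ∈ E ∧ d x + 1 = d w := by
    obtain ⟨ℓ, hℓ⟩ := Nat.exists_eq_succ_of_ne_zero (mt hd_eq_zero hw)
    obtain ⟨x, hwx, hx⟩ := dirPath_succ_iff.mp (hℓ ▸ hd_path w)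
    have := hd_min w _ (dirPath_succ_iff.mpr ⟨x, hwx, hd_path x⟩)
    exact ⟨x, hwx, by have := hd_min x _ hx; omega⟩
  choose! h hE hd using hstep
  have hdu : d u = L := le_antisymm (hd_min u L hL) (not_lt.mp fun h => hLmin _ h (hd_path u))
  have hdv : d v = 0 := Nat.eq_zero_of_le_zero (hd_min v 0 (dirPath_zero_iff.mpr rfl))
  have hiter (t) (ht : t ≤ L) : d (h^[t] u) + t = L := by
    induction t with
    | zero => simpa using hdu
    | succ t ih =>
      have hne : h^[t] u ≠ v := fun he => by have := ih (by omega); rw [he, hdv] at this; omega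
      rw [Function.iterate_succ_apply']
      have := hd _ hne; have := ih (by omega); omega
  refine ⟨d, h, fun w hw => ⟨hE w hw, by have := hd w hw; omega⟩, fun t ht he => ?_,
    hd_eq_zero (by have := hiter L le_rfl; omega)⟩
  have := hiter t ht.le
  rw [he, hdv] at this
  omega

end DirPath

section Expansion

variable {α : Type*} [Fintype α] [DecidableEq α] {R : Type*} [CommRing R]
  {E : Finset (α × α)} {u v : α}

/-- The path is the `π`-orbit of `u`. -/
lemma exists_dirPath_le_card_moved (π : Equiv.Perm α) (hπ : π v = u)
    (hE : ∀ c, c ≠ v → π c ≠ c → (c, π c) ∈ E) :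
    ∃ ℓ ≤ #{c ∈ univ.erase v | π c ≠ c}, DirPath E u v ℓ := by
  have hex : ∃ n, (π ^ n) u = v :=
    (show π.SameCycle v u from ⟨1, by simpa⟩).symm.exists_nat_pow_eq
  classical
  set n := Nat.find hex
  have hn : (π ^ n) u = v := Nat.find_spec hex
  have hpow_succ (s : ℕ) : (π ^ (s + 1)) u = π ((π ^ s) u) := by
    rw [pow_succ', Equiv.Perm.mul_apply]
  have hinj {a b : ℕ} (hab : a < b) (hb : b ≤ n) : (π ^ a) u ≠ (π ^ b) u := fun he => by
    refine Nat.find_min hex (show n - (b - a) < n by omega) ?_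
    rw [← hn, show n = (n - b) + b by omega, show n - b + b - (b - a) = n - b + a by omega,
      pow_add, pow_add, Equiv.Perm.mul_apply, Equiv.Perm.mul_apply, he]
  have hne (s : ℕ) (hs : s < n) : (π ^ s) u ≠ v := Nat.find_min hex hs
  have hmoved (s : ℕ) (hs : s < n) : π ((π ^ s) u) ≠ (π ^ s) u := by
    rw [← hpow_succ]; exact (hinj s.lt_succ_self hs).symm
  refine ⟨n, ?_, fun s => (π ^ s) u, by simp, hn, fun s hs => ?_⟩
  · simpa using card_le_card_of_injOn (s := range n) (fun s => (π ^ s) u)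
      (fun s hs => by
        have hs : s < n := by simpa using hs
        exact mem_coe.mpr (mem_filter.mpr ⟨mem_erase.mpr ⟨hne s hs, mem_univ _⟩, hmoved s hs⟩))
      (fun a ha b hb he => by
        simp only [coe_range, Set.mem_Iio] at ha hb
        by_contra hab
        rcases Nat.lt_or_gt_of_ne hab with h | h
        exacts [hinj h hb.le he, hinj h ha.le he.symm])
  · simp only [hpow_succ]; exact hE _ (hne s hs) (hmoved s hs)

lemma det_updateRow_single (M : Matrix α α R) (u v : α) :
    (M.updateRow u (Pi.single v 1)).det =
      ∑ π : Equiv.Perm α with π v = u, Equiv.Perm.sign π • ∏ c ∈ univ.erase v, M (π c) c := by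
  rw [Matrix.det_apply, sum_filter]
  refine sum_congr rfl fun π _ => ?_
  split_ifs with hπ
  · rw [← mul_prod_erase univ _ (mem_univ v), hπ, Matrix.updateRow_self, Pi.single_eq_same,
      one_mul]
    refine congrArg _ (prod_congr rfl fun c hc => ?_)
    rw [Matrix.updateRow_ne (hπ ▸ π.injective.ne (ne_of_mem_erase hc))]
  · refine (congrArg _ (prod_eq_zero (mem_univ (π.symm u)) ?_)).trans (smul_zero _)
    rw [Equiv.apply_symm_apply, Matrix.updateRow_self,
      Pi.single_eq_of_ne fun h => hπ (by rw [← h, Equiv.apply_symm_apply])]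

lemma map_det_charmatrix_updateRow {S : Type*} [CommRing S] (f : R →+* S) (M : Matrix α α R)
    (u v : α) :
    (M.charmatrix.updateRow u (Pi.single v 1)).det.map f =
      ((M.map f).charmatrix.updateRow u (Pi.single v 1)).det := by
  rw [← coe_mapRingHom, RingHom.map_det, RingHom.mapMatrix_apply, Matrix.map_updateRow,
    coe_mapRingHom, ← Matrix.charmatrix_map]
  congr 2
  ext c
  by_cases hc : c = v <;> simp [hc]

lemma natDegree_prod_charmatrix_le (M : Matrix α α R) (π : Equiv.Perm α) (s : Finset α) :
    (∏ c ∈ s, M.charmatrix (π c) c).natDegree ≤ #{c ∈ s | π c = c} := by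
  refine (natDegree_prod_le _ _).trans ?_
  simpa using sum_le_sum fun c (_ : c ∈ s) => Matrix.charmatrix_apply_natDegree_le (π c) c

lemma coeff_det_charmatrix_updateRow_eq_zero {M : Matrix α α R}
    (hM : ∀ x y, x ≠ y → (y, x) ∉ E → M x y = 0) {L : ℕ}
    (hLmin : ∀ L' < L, ¬ DirPath E u v L') {k : ℕ} (hk : Fintype.card α - L ≤ k) :
    (M.charmatrix.updateRow u (Pi.single v 1)).det.coeff k = 0 := by
  rw [det_updateRow_single, finsetSum_coeff]
  refine sum_eq_zero fun π hπ => ?_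
  rw [Units.smul_def, coeff_smul]
  by_cases hE : ∀ c, c ≠ v → π c ≠ c → (c, π c) ∈ E
  · obtain ⟨ℓ, hℓ, hpath⟩ := exists_dirPath_le_card_moved π (mem_filter.mp hπ).2 hE
    have hLℓ : L ≤ ℓ := not_lt.mp fun h => hLmin ℓ h hpath
    have hcard : #{c ∈ univ.erase v | π c = c} + #{c ∈ univ.erase v | π c ≠ c} =
        Fintype.card α - 1 := by
      rw [card_filter_add_card_filter_not, card_erase_of_mem (mem_univ v), card_univ]
    have hdeg := natDegree_prod_charmatrix_le M π (univ.erase v)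
    have : 0 < Fintype.card α := Fintype.card_pos_iff.mpr ⟨v⟩
    rw [coeff_eq_zero_of_natDegree_lt (by omega), smul_zero]
  · push Not at hE
    obtain ⟨c, hcv, hπc, hcE⟩ := hE
    rw [prod_eq_zero (mem_erase.mpr ⟨hcv, mem_univ c⟩)
      (by rw [Matrix.charmatrix_apply_ne _ _ _ hπc, hM _ _ hπc hcE, map_zero, neg_zero]),
      coeff_zero, smul_zero]

end Expansion

section Forest

variable {α : Type*} {W : Finset α} {h : α → α} {d : α → ℕ} {u v : α} {L : ℕ}

lemma strictAntiOn_iterate (hd : ∀ w ∈ W, d (h w) < d w) (hW : ∀ t < L, h^[t] u ∈ W) :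
    StrictAntiOn (fun t => d (h^[t] u)) (Set.Iic L) := by
  intro s _ t ht hst
  dsimp only
  induction t, hst using Nat.le_induction with
  | base => rw [Function.iterate_succ_apply']; exact hd _ (hW s ht)
  | succ t hst ih =>
    rw [Function.iterate_succ_apply']
    exact (hd _ (hW t ht)).trans (ih (Set.mem_Iic.mpr (by simp at ht; omega)))

lemma injOn_iterate (hd : ∀ w ∈ W, d (h w) < d w) (hW : ∀ t < L, h^[t] u ∈ W) :
    Set.InjOn (h^[·] u) (Set.Iic L) :=
  fun _ hs _ ht hst => (strictAntiOn_iterate hd hW).injOn hs ht (congrArg d hst)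

lemma card_image_iterate [DecidableEq α] (hd : ∀ w ∈ W, d (h w) < d w)
    (hW : ∀ t < L, h^[t] u ∈ W) : #((range L).image (h^[·] u)) = L := by
  rw [card_image_of_injOn ((injOn_iterate hd hW).mono fun t ht => by
    simp only [coe_range, Set.mem_Iio] at ht; exact ht.le), card_range]

lemma image_iterate_subset [DecidableEq α] (hW : ∀ t < L, h^[t] u ∈ W) :
    (range L).image (h^[·] u) ⊆ W := by
  intro c hc
  obtain ⟨t, ht, rfl⟩ := mem_image.mp hc
  exact hW t (mem_range.mp ht)

def MovesAlong (π : Equiv.Perm α) (W : Finset α) (h : α → α) (v : α) : Prop :=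
  ∀ c, c ≠ v → π c ≠ c → c ∈ W ∧ π c = h c

variable {π : Equiv.Perm α}

lemma MovesAlong.apply_iterate (hπW : MovesAlong π W h v) (hd : ∀ w ∈ W, d (h w) < d w)
    (hW : ∀ t < L, h^[t] u ∈ W) (hv : h^[L] u = v) (hπ : π v = u) {t : ℕ} (ht : t < L) :
    π (h^[t] u) = h^[t + 1] u := by
  have hinj := injOn_iterate hd hW
  have hne_v {s} (hs : s < L) : h^[s] u ≠ v := fun he =>
    hs.ne (hinj (Set.mem_Iic.mpr hs.le) (Set.mem_Iic.mpr le_rfl) (he.trans hv.symm))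
  induction t with
  | zero =>
    have huv : u ≠ v := hne_v ht
    exact (hπW u huv fun hu => huv (π.injective (hu.trans hπ.symm))).2
  | succ t ih =>
    have hprev := ih (by omega)
    have hmoved : π (h^[t + 1] u) ≠ h^[t + 1] u := fun he => by
      have := hinj (Set.mem_Iic.mpr (by omega)) (Set.mem_Iic.mpr (by omega))
        (π.injective (hprev.trans he.symm))
      omega
    rw [(hπW _ (hne_v ht) hmoved).2, ← Function.iterate_succ_apply' h]

lemma MovesAlong.exists_iterate_eq (hπW : MovesAlong π W h v) (hd : ∀ w ∈ W, d (h w) < d w)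
    (hW : ∀ t < L, h^[t] u ∈ W) (hv : h^[L] u = v) (hπ : π v = u) {c : α} {t : ℕ}
    (ht : t ≤ L) (hc : π c = h^[t] u) : ∃ s ≤ L, h^[s] u = c := by
  cases t with
  | zero => exact ⟨L, le_rfl, hv.trans (π.injective (hπ.trans hc.symm))⟩
  | succ s =>
    refine ⟨s, by omega, π.injective ?_⟩
    rw [hc, hπW.apply_iterate hd hW hv hπ (by omega)]

/-- Along a nontrivial orbit off the cycle `v ↦ u ↦ h u ↦ ⋯ ↦ v`, `d` would decrease forever. -/
lemma MovesAlong.apply_eq_self (hπW : MovesAlong π W h v) (hd : ∀ w ∈ W, d (h w) < d w)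
    (hW : ∀ t < L, h^[t] u ∈ W) (hv : h^[L] u = v) (hπ : π v = u) (c : α) :
    (∀ t ≤ L, h^[t] u ≠ c) → π c = c := by
  induction c using (InvImage.wf d wellFounded_lt).induction with
  | _ c ih =>
  intro hc
  by_contra hπc
  obtain ⟨hcW, hπh⟩ := hπW c (fun he => hc L le_rfl (hv.trans he.symm)) hπc
  have hπc' : π (π c) = π c := ih (π c) (hπh ▸ hd c hcW) fun t ht he => by
    obtain ⟨s, hs, hsc⟩ := hπW.exists_iterate_eq hd hW hv hπ ht he.symm
    exact hc s hs hsc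
  exact hπc (π.injective hπc')

lemma MovesAlong.unique {π' : Equiv.Perm α} (hπW : MovesAlong π W h v)
    (hπ'W : MovesAlong π' W h v) (hd : ∀ w ∈ W, d (h w) < d w) (hW : ∀ t < L, h^[t] u ∈ W)
    (hv : h^[L] u = v) (hπ : π v = u) (hπ' : π' v = u) : π = π' := by
  ext c
  by_cases hc : ∃ t ≤ L, h^[t] u = c
  · obtain ⟨t, ht, rfl⟩ := hc
    rcases ht.lt_or_eq with ht | rfl
    · rw [hπW.apply_iterate hd hW hv hπ ht, hπ'W.apply_iterate hd hW hv hπ' ht]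
    · rw [hv, hπ, hπ']
  · push Not at hc
    rw [hπW.apply_eq_self hd hW hv hπ c hc, hπ'W.apply_eq_self hd hW hv hπ' c hc]

lemma exists_movesAlong [DecidableEq α] (hd : ∀ w ∈ W, d (h w) < d w)
    (hW : ∀ t < L, h^[t] u ∈ W) (hv : h^[L] u = v) :
    ∃ π : Equiv.Perm α, π v = u ∧ MovesAlong π W h v := by
  have hl : (List.iterate h u (L + 1)).Nodup := by
    rw [← List.range_map_iterate]
    exact List.nodup_range.map_on fun s hs t ht hst =>
      injOn_iterate hd hW (Set.mem_Iic.mpr (by simp at hs; omega))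
        (Set.mem_Iic.mpr (by simp at ht; omega)) hst
  set l := List.iterate h u (L + 1)
  have hform {t : ℕ} (ht : t ≤ L) : l.formPerm (h^[t] u) = h^[(t + 1) % (L + 1)] u := by
    have := List.formPerm_apply_getElem l hl t (by rw [List.length_iterate]; omega)
    rwa [List.getElem_iterate, List.getElem_iterate, List.length_iterate] at this
  refine ⟨l.formPerm, by simpa [← hv] using hform le_rfl, fun c hcv hc => ?_⟩
  obtain ⟨t, ht, rfl⟩ := List.mem_iterate.mp ((not_imp_comm.mp List.formPerm_apply_of_notMem) hc)
  have htL : t < L := lt_of_le_of_ne (by omega) fun he => hcv (he ▸ hv)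
  rw [hform (by omega), Nat.mod_eq_of_lt (by omega), Function.iterate_succ_apply']
  exact ⟨hW t htL, rfl⟩

end Forest

section ForestMatrix

variable {α : Type*} [DecidableEq α] {R : Type*} [CommRing R] {W : Finset α}
  {h : α → α} {d : α → ℕ} {u v : α} {L : ℕ} {π : Equiv.Perm α}

/-- The compartmental matrix of the forest with edges `w → h w` for `w ∈ W`, all labels `1` and
no leaks. -/
def forestMatrix (W : Finset α) (h : α → α) : Matrix α α R :=
  Matrix.of fun x y => if y ∈ W then (if x = h y then 1 else 0) - (if x = y then 1 else 0) else 0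

variable [Fintype α]

lemma charmatrix_forestMatrix_apply_of_ne {x y : α} (hxy : x ≠ y) :
    (forestMatrix W h : Matrix α α R).charmatrix x y = if y ∈ W ∧ x = h y then -1 else 0 := by
  rw [Matrix.charmatrix_apply_ne _ _ _ hxy]
  simp only [forestMatrix, Matrix.of_apply, if_neg hxy, sub_zero]
  by_cases hy : y ∈ W <;> by_cases hx : x = h y <;> simp [hy, hx]

lemma charmatrix_forestMatrix_apply_self {y : α} (hy : y ∈ W → h y ≠ y) :
    (forestMatrix W h : Matrix α α R).charmatrix y y = if y ∈ W then X + 1 else X := by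
  rw [Matrix.charmatrix_apply_eq]
  by_cases hyW : y ∈ W
  · simp [forestMatrix, hyW, Ne.symm (hy hyW)]
  · simp [forestMatrix, hyW]

lemma MovesAlong.charmatrix_forestMatrix_apply (hπW : MovesAlong π W h v)
    (hd : ∀ w ∈ W, d (h w) < d w) (hW : ∀ t < L, h^[t] u ∈ W) (hv : h^[L] u = v)
    (hπ : π v = u) {c : α} (hcv : c ≠ v) :
    (forestMatrix W h : Matrix α α R).charmatrix (π c) c =
      if c ∈ (range L).image (h^[·] u) then -1 else if c ∈ W then X + 1 else X := by
  have hh_ne (w : α) (hw : w ∈ W) : h w ≠ w := fun he => (hd w hw).ne (by rw [he])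
  by_cases hc : c ∈ (range L).image (h^[·] u)
  · rw [if_pos hc]
    obtain ⟨t, ht, rfl⟩ := mem_image.mp hc
    rw [hπW.apply_iterate hd hW hv hπ (mem_range.mp ht), Function.iterate_succ_apply',
      charmatrix_forestMatrix_apply_of_ne (hh_ne _ (hW t (mem_range.mp ht))),
      if_pos ⟨hW t (mem_range.mp ht), rfl⟩]
  · rw [if_neg hc, hπW.apply_eq_self hd hW hv hπ c fun t ht he => ?_,
      charmatrix_forestMatrix_apply_self (hh_ne c)]
    rcases ht.lt_or_eq with ht | rfl
    · exact hc (mem_image.mpr ⟨t, mem_range.mpr ht, he⟩)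
    · exact hcv (he.symm.trans hv)

lemma prod_erase_ite_mem {M : Type*} [CommMonoid M] {P W : Finset α} (hPW : P ⊆ W)
    (hvW : v ∉ W) (a b c : M) :
    ∏ x ∈ univ.erase v, (if x ∈ P then a else if x ∈ W then b else c) =
      a ^ #P * (b ^ (#W - #P) * c ^ (Fintype.card α - 1 - #W)) := by
  have hWv : W ⊆ univ.erase v := fun x hx => mem_erase.mpr ⟨fun he => hvW (he ▸ hx), mem_univ x⟩
  have hP : {x ∈ univ.erase v | x ∈ P} = P := filter_mem_eq_inter.trans
    (inter_eq_right.mpr (hPW.trans hWv))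
  have hWP : {x ∈ univ.erase v | x ∉ P ∧ x ∈ W} = W \ P := by
    ext x; simp only [mem_filter, mem_sdiff]; exact ⟨fun hx => ⟨hx.2.2, hx.2.1⟩,
      fun hx => ⟨hWv hx.1, hx.2, hx.1⟩⟩
  have hnW : {x ∈ univ.erase v | x ∉ P ∧ x ∉ W} = univ.erase v \ W := by
    ext x; simp only [mem_filter, mem_sdiff]; exact ⟨fun hx => ⟨hx.1, hx.2.2⟩,
      fun hx => ⟨hx.1, fun hxP => hx.2 (hPW hxP), hx.2⟩⟩
  rw [prod_ite, prod_const, prod_ite, prod_const, prod_const, filter_filter, filter_filter, hP,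
    hWP, hnW, card_sdiff_of_subset hPW, card_sdiff_of_subset hWv, card_erase_of_mem (mem_univ v),
    card_univ]

/-- Exactly one permutation, the cycle `v ↦ u ↦ h u ↦ ⋯ ↦ v`, contributes to the determinant. -/
lemma det_charmatrix_forestMatrix_updateRow (hd : ∀ w ∈ W, d (h w) < d w)
    (hW : ∀ t < L, h^[t] u ∈ W) (hv : h^[L] u = v) (hvW : v ∉ W) :
    ∃ ε : ℤˣ, ((forestMatrix W h : Matrix α α R).charmatrix.updateRow u (Pi.single v 1)).det =
      ε • ((X + 1) ^ (#W - L) * X ^ (Fintype.card α - 1 - #W)) := by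
  obtain ⟨π₀, hπ₀, hπ₀W⟩ := exists_movesAlong hd hW hv
  refine ⟨Equiv.Perm.sign π₀ * (-1) ^ L, ?_⟩
  rw [det_updateRow_single, sum_eq_single_of_mem π₀ (mem_filter.mpr ⟨mem_univ _, hπ₀⟩),
    prod_congr rfl fun c hc => hπ₀W.charmatrix_forestMatrix_apply hd hW hv hπ₀ (ne_of_mem_erase hc),
    prod_erase_ite_mem (image_iterate_subset hW) hvW, card_image_iterate hd hW, mul_smul]
  · congr 1
    simp [Units.smul_def, zsmul_eq_mul]
  intro π hπ hπne
  obtain ⟨c, hcv, hπc, hcond⟩ : ∃ c, c ≠ v ∧ π c ≠ c ∧ ¬ (c ∈ W ∧ π c = h c) := by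
    by_contra! hπW
    exact hπne (MovesAlong.unique hπW hπ₀W hd hW hv (mem_filter.mp hπ).2 hπ₀)
  rw [prod_eq_zero (mem_erase.mpr ⟨hcv, mem_univ c⟩)
    (by rw [charmatrix_forestMatrix_apply_of_ne hπc, if_neg hcond]), smul_zero]

end ForestMatrix

section Compartmental

variable {n : ℕ} {R : Type*} [CommRing R] {E : Finset (Fin n × Fin n)} {Lk : Finset (Fin n)}

lemma cmpMatrix_apply_of_notMem {a : Fin n → Fin n → R} {a0 : Fin n → R} {x y : Fin n}
    (hxy : x ≠ y) (hE : (y, x) ∉ E) : cmpMatrix E Lk a a0 x y = 0 := by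
  simp [cmpMatrix, hxy, hE]

lemma cmpMatrix_map {S : Type*} [CommRing S] (f : R →+* S) (a : Fin n → Fin n → R)
    (a0 : Fin n → R) :
    (cmpMatrix E Lk a a0).map f = cmpMatrix E Lk (fun i j => f (a i j)) (fun i => f (a0 i)) := by
  ext x y
  simp only [Matrix.map_apply, cmpMatrix]
  split_ifs <;> simp [map_sum]

lemma cmpMatrix_forest_eq_forestMatrix {W : Finset (Fin n)} {h : Fin n → Fin n}
    (hWE : ∀ w ∈ W, (w, h w) ∈ E ∧ h w ≠ w) :
    cmpMatrix E Lk (fun i j => if j ∈ W ∧ i = h j then (1 : R) else 0) (fun _ => 0) =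
      forestMatrix W h := by
  ext x y
  by_cases hy : y ∈ W
  · by_cases hxy : x = y
    · subst hxy
      simp [cmpMatrix, forestMatrix, hy, Ne.symm (hWE x hy).2, (hWE x hy).1]
    · by_cases hx : x = h y
      · subst hx
        simp [cmpMatrix, forestMatrix, hy, hxy, (hWE y hy).1]
      · simp [cmpMatrix, forestMatrix, hy, hxy, hx]
  · simp [cmpMatrix, forestMatrix, hy]

lemma coeff_units_smul_mul_X_pow_ne_zero [Nontrivial R] (ε : ℤˣ) (a k : ℕ) :
    (ε • ((X + 1 : R[X]) ^ a * X ^ k)).coeff k ≠ 0 := by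
  have h1 : ((X + 1 : R[X]) ^ a * X ^ k).coeff k = 1 := by
    have := coeff_mul_X_pow ((X + 1 : R[X]) ^ a) k 0
    rwa [zero_add, coeff_zero_eq_eval_zero, eval_pow, eval_add, eval_X, eval_one, zero_add,
      one_pow] at this
  rw [Units.smul_def, coeff_smul, h1]
  rcases Int.units_eq_one_or ε with rfl | rfl <;> simp

lemma coeff_det_submatrix_succAbove_eq_zero_iff {m : ℕ}
    (A : Matrix (Fin (m + 1)) (Fin (m + 1)) R[X]) (i j : Fin (m + 1)) (k : ℕ) :
    (A.submatrix i.succAbove j.succAbove).det.coeff k = 0 ↔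
      (A.updateRow i (Pi.single j 1)).det.coeff k = 0 := by
  rw [← Matrix.adjugate_apply, Matrix.adjugate_fin_succ_eq_det_submatrix]
  rcases neg_one_pow_eq_or R[X] (i + j : ℕ) with h | h <;> simp [h]

lemma coeff_det_charmatrix_cmpMatrix_updateRow_ne_zero [Nontrivial R] {u v : Fin n} {L : ℕ}
    {d : Fin n → ℕ} {h : Fin n → Fin n} (hdesc : ∀ w, w ≠ v → (w, h w) ∈ E ∧ d (h w) < d w)
    (hne : ∀ t < L, h^[t] u ≠ v) (hv : h^[L] u = v) {k : ℕ} (hk : k ≤ n - 1 - L) :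
    ((cmpMatrix E Lk (fun i j => (MvPolynomial.X (Sum.inl (i, j)) :
        MvPolynomial ((Fin n × Fin n) ⊕ Fin n) R)) (fun i => MvPolynomial.X (Sum.inr i))
      ).charmatrix.updateRow u (Pi.single v 1)).det.coeff k ≠ 0 := by
  have hd : ∀ w ∈ univ.erase v, d (h w) < d w := fun w hw => (hdesc w (ne_of_mem_erase hw)).2
  have hP : ∀ t < L, h^[t] u ∈ univ.erase v := fun t ht => mem_erase.mpr ⟨hne t ht, mem_univ _⟩
  have hPL := card_image_iterate hd hP
  have hPv := image_iterate_subset hP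
  have hcard : #(univ.erase v) = n - 1 := by
    rw [card_erase_of_mem (mem_univ v), card_univ, Fintype.card_fin]
  obtain ⟨W, hPW, hWv, hWcard⟩ := exists_subsuperset_card_eq hPv (n := n - 1 - k)
    (by have := card_le_card hPv; omega) (by omega)
  have hWE (w : Fin n) (hw : w ∈ W) : (w, h w) ∈ E ∧ h w ≠ w := by
    have := hdesc w (ne_of_mem_erase (hWv hw))
    exact ⟨this.1, this.2.ne ∘ congrArg d⟩
  let φ : MvPolynomial ((Fin n × Fin n) ⊕ Fin n) R →+* R :=
    MvPolynomial.eval (Sum.elim (fun e => if e.2 ∈ W ∧ e.1 = h e.2 then 1 else 0) 0)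
  have hmap : (cmpMatrix E Lk (fun i j => MvPolynomial.X (Sum.inl (i, j)))
      (fun i => MvPolynomial.X (Sum.inr i))).map φ = forestMatrix W h := by
    rw [cmpMatrix_map, ← cmpMatrix_forest_eq_forestMatrix (Lk := Lk) hWE]
    simp [φ]
  obtain ⟨ε, hε⟩ := det_charmatrix_forestMatrix_updateRow (R := R)
    (fun w hw => hd w (hWv hw))
    (fun t ht => hPW (mem_image_of_mem _ (mem_range.mpr ht))) hv
    (fun hvW => by simpa using hWv hvW)
  rw [show Fintype.card (Fin n) - 1 - #W = k by simp; omega] at hε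
  intro h0
  refine coeff_units_smul_mul_X_pow_ne_zero (R := R) ε (#W - L) k ?_
  rw [← hε, ← hmap, ← map_det_charmatrix_updateRow, coeff_map, h0, map_zero]

end Compartmental

end

theorem minor_det_coeffs_vanish_iff_general (m : ℕ)
    (E : Finset (Fin (m + 1) × Fin (m + 1))) (Lk : Finset (Fin (m + 1)))
    (hsc : ∀ u v : Fin (m + 1), Relation.ReflTransGen (fun x y => (x, y) ∈ E) u v)
    (inp outp : Fin (m + 1)) (L : ℕ)
    (hL : DirPath E inp outp L) (hLmin : ∀ L' < L, ¬ DirPath E inp outp L')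
    (D : Polynomial (MvPolynomial ((Fin (m + 1) × Fin (m + 1)) ⊕ Fin (m + 1)) ℚ))
    (hD : D = ((Matrix.charmatrix (cmpMatrix E Lk
        (fun i j => MvPolynomial.X (Sum.inl (i, j)))
        (fun i => MvPolynomial.X (Sum.inr i)))).submatrix
          inp.succAbove outp.succAbove).det) :
    (∀ k : ℕ, m + 1 - L ≤ k → D.coeff k = 0) ∧
      (∀ k : ℕ, k ≤ m - L → D.coeff k ≠ 0) := by
  subst hD
  obtain ⟨d, h, hdesc, hne, hv⟩ := exists_shortest_path_iterate
    (fun w => exists_dirPath_of_reflTransGen (hsc w outp)) hL hLmin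
  refine ⟨fun k hk => ?_, fun k hk => ?_⟩
  · rw [coeff_det_submatrix_succAbove_eq_zero_iff]
    exact coeff_det_charmatrix_updateRow_eq_zero (fun _ _ => cmpMatrix_apply_of_notMem) hLmin
      (by simpa using hk)
  · rw [Ne, coeff_det_submatrix_succAbove_eq_zero_iff]
    exact coeff_det_charmatrix_cmpMatrix_updateRow_ne_zero hdesc hne hv (by simpa using hk)

/-- For a strongly connected model with `n = m+1` compartments, input `j = inp`,
output `i = outp` (`inp ≠ outp`), parameters independent indeterminates, and `L` the
length of a shortest directed path from input to output, the coefficients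
`d_{n-1}, …, d_{n-L}` of `det((λI - A)^{inp,outp})` vanish, while
`d_{n-L-1}, …, d_0` are nonzero polynomials in the parameters. -/
theorem minor_det_coeffs_vanish_iff (m : ℕ)
    (E : Finset (Fin (m + 1) × Fin (m + 1))) (Lk : Finset (Fin (m + 1)))
    (hloop : ∀ e ∈ E, e.1 ≠ e.2)
    (hsc : ∀ u v : Fin (m + 1), Relation.ReflTransGen (fun x y => (x, y) ∈ E) u v)
    (inp outp : Fin (m + 1)) (hio : inp ≠ outp) (L : ℕ)
    (hL : DirPath E inp outp L) (hLmin : ∀ L' < L, ¬ DirPath E inp outp L')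
    (D : Polynomial (MvPolynomial ((Fin (m + 1) × Fin (m + 1)) ⊕ Fin (m + 1)) ℚ))
    (hD : D = ((Matrix.charmatrix (cmpMatrix E Lk
        (fun i j => MvPolynomial.X (Sum.inl (i, j)))
        (fun i => MvPolynomial.X (Sum.inr i)))).submatrix
          inp.succAbove outp.succAbove).det) :
    (∀ k : ℕ, m + 1 - L ≤ k → D.coeff k = 0) ∧
      (∀ k : ℕ, k ≤ m - L → D.coeff k ≠ 0) :=
  minor_det_coeffs_vanish_iff_general m E Lk hsc inp outp L hL hLmin D hD
end

section
/- For n ≥ 3, let G_n be the bidirectional cycle graph on n vertices (edges 1 ⇄ 2 ⇄ ⋯ ⇄ n ⇄ 1). Then every linear compartmental model (G_n, In, Out, Leak) with exactly one input and one output is unidentifiable. -/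
/-!
For `n ≥ 3` the bidirectional cycle has `2n` distinct arcs, so the coefficient map is polynomial
in at least `2n` parameters, while one of its `2n` coordinates, the coefficient of `λ^{n-1}` in
the minor, is constant. It thus factors through a polynomial map `P : ℝ^ι → ℝ^κ` with
`|κ| < |ι|`, and such a map has infinite generic fibres: take a maximal nonvanishing minor of the
Jacobian of `P`, with rows `f` and columns `g`. Off its (null) zero set, `P ∘ f` together with
the coordinates outside `g` is a local diffeomorphism, so pulling back a line in a coordinate
outside `g` gives an injective curve along which `P ∘ f` is constant. As all larger minors
vanish, every row of the Jacobian is a combination of the rows `f`, hence all of `P` is constant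
along that curve.
-/

open scoped Classical
open MeasureTheory Polynomial

noncomputable section

/-- Parameter space of a linear compartmental model: one real parameter for each
edge and each leak. -/
abbrev Params {α : Type*} (E : Finset (α × α)) (Lk : Finset α) : Type _ :=
  ({e // e ∈ E} ⊕ {l // l ∈ Lk}) → ℝ

/-- The compartmental matrix, as a function of the parameter vector `θ`. -/
def cmpMatrixP {n : ℕ} (E : Finset (Fin n × Fin n)) (Lk : Finset (Fin n))
    (θ : Params E Lk) : Matrix (Fin n) (Fin n) ℝ :=
  fun i j =>
    if i = j then
      -((if h : j ∈ Lk then θ (Sum.inr ⟨j, h⟩) else 0) +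
        ∑ e ∈ E.attach, if (e : Fin n × Fin n).1 = j then θ (Sum.inl e) else 0)
    else if h : (j, i) ∈ E then θ (Sum.inl ⟨(j, i), h⟩) else 0

/-- The coefficient map of the input-output equation
`det(∂I - A) y_out = ± det((∂I - A)^{in,out}) u_in` of a model with one input `inp`
and one output `outp`: it sends the parameter vector `θ` to the coefficients of
`λ^0, …, λ^{n-1}` in `det(λI - A)` (first component) and in
`det((λI - A)^{inp,outp})` (second component). -/
def coeffMap {m : ℕ} (E : Finset (Fin (m + 1) × Fin (m + 1))) (Lk : Finset (Fin (m + 1)))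
    (inp outp : Fin (m + 1)) (θ : Params E Lk) : Fin (m + 1) ⊕ Fin (m + 1) → ℝ :=
  Sum.elim
    (fun k => (Matrix.charmatrix (cmpMatrixP E Lk θ)).det.coeff k)
    (fun k => ((Matrix.charmatrix (cmpMatrixP E Lk θ)).submatrix
        inp.succAbove outp.succAbove).det.coeff k)

/-- A map `c` on parameter space is generically locally identifiable if, outside a
set of measure zero, every point has a neighborhood on which `c` is injective. -/
def GenericallyLocallyIdentifiable {P : Type*} [TopologicalSpace P] [MeasureSpace P]
    {Q : Type*} (c : P → Q) : Prop :=
  ∃ B : Set P, volume B = 0 ∧ ∀ θ ∉ B, ∃ U ∈ nhds θ, Set.InjOn c U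

/-- A map `c` on parameter space is unidentifiable if it is generically
infinite-to-one. -/
def Unidentifiable {P : Type*} [MeasureSpace P] {Q : Type*} (c : P → Q) : Prop :=
  ∃ B : Set P, volume B = 0 ∧ ∀ θ ∉ B, {θ' | c θ' = c θ}.Infinite

namespace MvPolynomial

variable {ι : Type*} [Fintype ι]

def fderivEval (p : MvPolynomial ι ℝ) (x : ι → ℝ) : (ι → ℝ) →L[ℝ] ℝ :=
  ∑ i, MvPolynomial.eval x (pderiv i p) • ContinuousLinearMap.proj i

theorem fderivEval_apply (p : MvPolynomial ι ℝ) (x v : ι → ℝ) :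
    fderivEval p x v = ∑ i, MvPolynomial.eval x (pderiv i p) * v i := by
  simp [fderivEval]

theorem hasStrictFDerivAt_eval (p : MvPolynomial ι ℝ) (x : ι → ℝ) :
    HasStrictFDerivAt (fun y => MvPolynomial.eval y p) (fderivEval p x) x := by
  induction p using MvPolynomial.induction_on with
  | C a =>
    have h : fderivEval (C a) x = 0 := by ext; simp [fderivEval_apply]
    simpa [h] using hasStrictFDerivAt_const a x
  | add p q hp hq =>
    have h : fderivEval (p + q) x = fderivEval p x + fderivEval q x := by
      ext; simp [fderivEval_apply, Finset.sum_add_distrib, add_mul]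
    simpa [h] using hp.fun_add hq
  | mul_X p i hp =>
    have h : fderivEval (p * X i) x =
        MvPolynomial.eval x p • ContinuousLinearMap.proj i + x i • fderivEval p x := by
      ext v
      simp [fderivEval_apply, Pi.single_apply, add_mul, Finset.sum_add_distrib, Finset.mul_sum,
        mul_assoc, add_comm, apply_ite (MvPolynomial.eval x), ite_mul]
    simpa [h] using
      hp.fun_mul (ContinuousLinearMap.proj (R := ℝ) (φ := fun _ : ι => ℝ) i).hasStrictFDerivAt

theorem volume_setOf_eval_eq_zero_fin : ∀ {n : ℕ} {p : MvPolynomial (Fin n) ℝ}, p ≠ 0 →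
    volume {x | MvPolynomial.eval x p = 0} = 0
  | 0, p, hp => by
    obtain ⟨a, rfl⟩ := C_surjective (Fin 0) p
    have ha : a ≠ 0 := by rintro rfl; simp at hp
    simp [ha]
  | n + 1, p, hp => by
    -- Fubini, viewing `p` as a polynomial in `x 0` over the remaining variables
    set q := finSuccEquiv ℝ n p
    obtain ⟨k, hk⟩ : ∃ k, q.coeff k ≠ 0 := by
      by_contra! h
      exact hp ((EmbeddingLike.map_eq_zero_iff).1 (Polynomial.ext (by simpa using h)))
    have hslice : ∀ᵐ s : Fin n → ℝ,
        volume {y : ℝ | (q.map (MvPolynomial.eval s)).eval y = 0} = 0 := by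
      have hcoeff : ∀ᵐ s : Fin n → ℝ, MvPolynomial.eval s (q.coeff k) ≠ 0 :=
        ae_iff.2 (by simpa using volume_setOf_eval_eq_zero_fin hk)
      filter_upwards [hcoeff] with s hs
      have hq : q.map (MvPolynomial.eval s) ≠ 0 := fun h =>
        hs (by simpa using congrArg (·.coeff k) h)
      exact (Polynomial.finite_setOfPred_isRoot hq).measure_zero _
    set e := MeasurableEquiv.piFinSuccAbove (fun _ : Fin (n + 1) => ℝ) 0
    have hS : MeasurableSet (e.symm ⁻¹' {x | MvPolynomial.eval x p = 0}) :=
      e.symm.measurable ((isClosed_singleton.preimage (continuous_eval p)).measurableSet)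
    rw [← (volume_preserving_piFinSuccAbove (fun _ => ℝ) 0).symm.measure_preimage_equiv,
      Measure.volume_eq_prod, Measure.prod_apply_symm hS]
    refine (lintegral_congr_ae ?_).trans lintegral_zero
    filter_upwards [hslice] with s hs
    convert hs using 2
    ext y
    simp [e, MeasurableEquiv.piFinSuccAbove_symm_apply, Fin.consEquiv, ← eval_eq_eval_mv_eval', q]

theorem volume_setOf_eval_eq_zero {p : MvPolynomial ι ℝ} (hp : p ≠ 0) :
    volume {x : ι → ℝ | MvPolynomial.eval x p = 0} = 0 := by
  let e := Fintype.equivFin ι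
  have hq : rename e p ≠ 0 := (map_ne_zero_iff _ (rename_injective _ e.injective)).2 hp
  rw [← (volume_measurePreserving_piCongrLeft (fun _ => ℝ) e).symm.measure_preimage_equiv]
  convert volume_setOf_eval_eq_zero_fin hq using 2
  ext y
  simp only [Set.mem_preimage, Set.mem_ofPred_eq, eval_rename, Function.comp_def]
  rfl

end MvPolynomial

namespace Matrix

variable {m n : Type*}

theorem injective_of_det_submatrix_ne_zero {R : Type*} [CommRing R] {A : Matrix m n R} {r : ℕ}
    {f : Fin r → m} {g : Fin r → n} (h : (A.submatrix f g).det ≠ 0) :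
    Function.Injective f ∧ Function.Injective g := by
  constructor <;> intro a b hab <;> by_contra hne <;> apply h
  · exact det_zero_of_row_eq hne (by ext; simp [hab])
  · exact det_zero_of_column_eq hne (by simp [hab])

theorem exists_maximal_nonzero_minor {R : Type*} [Fintype m] [CommRing R] [Nontrivial R]
    (A : Matrix m n R) :
    ∃ (r : ℕ) (f : Fin r → m) (g : Fin r → n), (A.submatrix f g).det ≠ 0 ∧
      ∀ (f' : Fin (r + 1) → m) (g' : Fin (r + 1) → n), (A.submatrix f' g').det = 0 := by
  let P s := ∃ (f : Fin s → m) (g : Fin s → n), (A.submatrix f g).det ≠ 0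
  have hbound : ∀ s, P s → s ≤ Fintype.card m := fun s ⟨f, g, h⟩ => by
    have := Fintype.card_le_of_injective f (injective_of_det_submatrix_ne_zero h).1
    simpa using this
  obtain ⟨f, g, h⟩ : P (Nat.findGreatest P (Fintype.card m)) :=
    Nat.findGreatest_spec (Nat.zero_le _) ⟨Fin.elim0, Fin.elim0, by simp⟩
  refine ⟨_, f, g, h, fun f' g' => ?_⟩
  by_contra h'
  exact Nat.findGreatest_is_greatest (Nat.lt_succ_self _) (hbound _ ⟨f', g', h'⟩)
    ⟨f', g', h'⟩

-- The Schur complement of the invertible block in a vanishing bordered minor is zero.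
theorem exists_row_eq_vecMul_of_minor_eq_zero {K : Type*} [Field K] {A : Matrix m n K} {r : ℕ}
    {f : Fin r → m} {g : Fin r → n} (hfg : (A.submatrix f g).det ≠ 0)
    (hminor : ∀ (f' : Fin (r + 1) → m) (g' : Fin (r + 1) → n), (A.submatrix f' g').det = 0)
    (k : m) : A k = (fun i => A k (g i)) ᵥ* (A.submatrix f g)⁻¹ ᵥ* A.submatrix f id := by
  have := invertibleOfIsUnitDet _ (isUnit_iff_ne_zero.2 hfg)
  funext j
  let F : Fin r ⊕ Fin 1 → m := Sum.elim f fun _ => k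
  let G : Fin r ⊕ Fin 1 → n := Sum.elim g fun _ => j
  have hblocks : A.submatrix F G = fromBlocks (A.submatrix f g) (A.submatrix f fun _ => j)
      (A.submatrix (fun _ => k) g) (A.submatrix (fun _ : Fin 1 => k) fun _ : Fin 1 => j) := by
    ext (i | i) (l | l) <;> rfl
  have hzero : (A.submatrix F G).det = 0 := by
    rw [← det_submatrix_equiv_self finSumFinEquiv.symm]
    exact hminor _ _
  rw [hblocks, det_fromBlocks₁₁, mul_eq_zero, or_iff_right hfg, det_unique, sub_apply,
    sub_eq_zero] at hzero
  simpa [invOf_eq_nonsing_inv, mul_apply, vecMul, dotProduct, Finset.sum_mul] using hzero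

theorem mulVec_eq_zero_of_forall_minor_eq_zero {K : Type*} [Fintype n] [Field K]
    {A : Matrix m n K} {r : ℕ} {f : Fin r → m} {g : Fin r → n} (hfg : (A.submatrix f g).det ≠ 0)
    (hminor : ∀ (f' : Fin (r + 1) → m) (g' : Fin (r + 1) → n), (A.submatrix f' g').det = 0)
    {v : n → K} (hv : A.submatrix f id *ᵥ v = 0) : A *ᵥ v = 0 := by
  funext k
  rw [mulVec, exists_row_eq_vecMul_of_minor_eq_zero hfg hminor k, ← dotProduct_mulVec, hv,
    dotProduct_zero, Pi.zero_apply]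

end Matrix

theorem exists_curve_of_hasStrictFDerivAt {E G : Type*} [NormedAddCommGroup E] [NormedSpace ℝ E]
    [CompleteSpace E] [NormedAddCommGroup G] [NormedSpace ℝ G] {φ : E → G} {U : Set E}
    (hU : IsOpen U)
    (hφ : ∀ x ∈ U, ∃ φ' : E ≃L[ℝ] G, HasStrictFDerivAt φ (φ' : E →L[ℝ] G) x)
    {x₀ : E} (hx₀ : x₀ ∈ U) (v : G) :
    ∃ ε > 0, ∃ γ : ℝ → E, γ 0 = x₀ ∧ ∀ t ∈ Set.Ioo (-ε) ε,
      γ t ∈ U ∧ φ (γ t) = φ x₀ + t • v ∧ DifferentiableAt ℝ γ t := by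
  obtain ⟨φ₀', hφ₀⟩ := hφ x₀ hx₀
  set Φ := hφ₀.toOpenPartialHomeomorph φ
  have hΦ : ⇑Φ = φ := hφ₀.toOpenPartialHomeomorph_coe
  have hsrc : x₀ ∈ Φ.source := hφ₀.mem_toOpenPartialHomeomorph_source
  let u : ℝ → G := fun t => φ x₀ + t • v
  have hu : Continuous u := by fun_prop
  have hu0 : u 0 = Φ x₀ := by simp [u, hΦ]
  have hγ0 : Φ.symm (u 0) = x₀ := by rw [hu0, Φ.left_inv hsrc]
  have hnear : ∀ᶠ t in nhds 0, u t ∈ Φ.target ∧ Φ.symm (u t) ∈ U := by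
    have htgt₀ : u 0 ∈ Φ.target := hu0 ▸ Φ.map_source hsrc
    have hU₀ : U ∈ nhds (Φ.symm (u 0)) := hγ0 ▸ hU.mem_nhds hx₀
    exact (hu.continuousAt.eventually_mem (Φ.open_target.mem_nhds htgt₀)).and
      (((Φ.continuousAt_symm htgt₀).comp hu.continuousAt).eventually_mem hU₀)
  obtain ⟨ε, hε, hball⟩ := Metric.eventually_nhds_iff_ball.1 hnear
  refine ⟨ε, hε, fun t => Φ.symm (u t), hγ0, fun t ht => ?_⟩
  obtain ⟨htgt, hU'⟩ := hball t (by rwa [Real.ball_eq_Ioo, zero_sub, zero_add])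
  refine ⟨hU', hΦ ▸ Φ.right_inv htgt, ?_⟩
  obtain ⟨φ', hφ'⟩ := hφ _ hU'
  have hsymm := Φ.hasFDerivAt_symm htgt (hΦ ▸ hφ'.hasFDerivAt)
  exact (hsymm.comp_hasDerivAt t (((hasDerivAt_id t).smul_const v).const_add _)).differentiableAt

namespace MvPolynomial

open Matrix

variable {ι κ : Type*} (P : κ → MvPolynomial ι ℝ)

def jacobian : Matrix κ ι (MvPolynomial ι ℝ) := fun k i => pderiv i (P k)

theorem eval_det_submatrix_jacobian (x : ι → ℝ) {r : ℕ} (f : Fin r → κ) (g : Fin r → ι) :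
    MvPolynomial.eval x ((jacobian P).submatrix f g).det =
      (((jacobian P).map (MvPolynomial.eval x)).submatrix f g).det :=
  RingHom.map_det _ _

variable [Fintype ι]

theorem fderivEval_eq_mulVec (x v : ι → ℝ) (k : κ) :
    fderivEval (P k) x v = ((jacobian P).map (MvPolynomial.eval x) *ᵥ v) k := by
  simp [fderivEval_apply, jacobian, mulVec, dotProduct]

variable {P} {r : ℕ} {f : Fin r → κ} {g : Fin r → ι}

theorem fderivEval_eq_zero_of_minors {x : ι → ℝ}
    (hx : MvPolynomial.eval x ((jacobian P).submatrix f g).det ≠ 0)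
    (hminor : ∀ (f' : Fin (r + 1) → κ) (g' : Fin (r + 1) → ι),
      ((jacobian P).submatrix f' g').det = 0)
    {v : ι → ℝ} (hv : ∀ i, fderivEval (P (f i)) x v = 0) (k : κ) :
    fderivEval (P k) x v = 0 := by
  rw [eval_det_submatrix_jacobian] at hx
  have hrows : ((jacobian P).map (MvPolynomial.eval x)).submatrix f id *ᵥ v = 0 := by
    ext i
    rw [Pi.zero_apply, ← hv i, fderivEval_eq_mulVec]
    rfl
  rw [fderivEval_eq_mulVec, mulVec_eq_zero_of_forall_minor_eq_zero hx
    (fun f' g' => by rw [← eval_det_submatrix_jacobian, hminor, map_zero]) hrows, Pi.zero_apply]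

theorem eval_eq_of_minors_of_eval_eq {I : Set ℝ} (hI : IsOpen I) (hI' : IsPreconnected I)
    (hminor : ∀ (f' : Fin (r + 1) → κ) (g' : Fin (r + 1) → ι),
      ((jacobian P).submatrix f' g').det = 0)
    {γ : ℝ → ι → ℝ} {c : Fin r → ℝ}
    (hγ : ∀ t ∈ I, MvPolynomial.eval (γ t) ((jacobian P).submatrix f g).det ≠ 0 ∧
      DifferentiableAt ℝ γ t ∧ ∀ i, MvPolynomial.eval (γ t) (P (f i)) = c i)
    {s t : ℝ} (hs : s ∈ I) (ht : t ∈ I) (k : κ) :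
    MvPolynomial.eval (γ s) (P k) = MvPolynomial.eval (γ t) (P k) := by
  have hd : ∀ t ∈ I, ∀ k, HasDerivAt (fun t => MvPolynomial.eval (γ t) (P k))
      (fderivEval (P k) (γ t) (deriv γ t)) t := fun t ht k =>
    (hasStrictFDerivAt_eval (P k) _).hasFDerivAt.comp_hasDerivAt t (hγ t ht).2.1.hasDerivAt
  refine hI.is_const_of_deriv_eq_zero hI'
    (fun t ht => (hd t ht k).differentiableAt.differentiableWithinAt) (fun t ht => ?_) hs ht
  rw [(hd t ht k).deriv]
  refine fderivEval_eq_zero_of_minors (hγ t ht).1 hminor (fun i => ?_) k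
  have hconst : HasDerivAt (fun t => MvPolynomial.eval (γ t) (P (f i))) 0 t :=
    (hasDerivAt_const t (c i)).congr_of_eventuallyEq
      (Filter.mem_of_superset (hI.mem_nhds ht) fun s hs => (hγ s hs).2.2 i)
  exact (hd t ht (f i)).unique hconst

variable (P f g)

def localCoords (x : ι → ℝ) : (Fin r → ℝ) × ({j // j ∉ Set.range g} → ℝ) :=
  (fun i => MvPolynomial.eval x (P (f i)), fun d => x d)

theorem exists_hasStrictFDerivAt_localCoords {x : ι → ℝ}
    (hx : MvPolynomial.eval x ((jacobian P).submatrix f g).det ≠ 0) :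
    ∃ e : (ι → ℝ) ≃L[ℝ] (Fin r → ℝ) × ({j // j ∉ Set.range g} → ℝ),
      HasStrictFDerivAt (localCoords P f g) (e : (ι → ℝ) →L[ℝ] _) x := by
  let R : (ι → ℝ) →L[ℝ] {j // j ∉ Set.range g} → ℝ :=
    ContinuousLinearMap.pi fun d => ContinuousLinearMap.proj d.1
  let D := (ContinuousLinearMap.pi fun i => fderivEval (P (f i)) x).prod R
  have hD : HasStrictFDerivAt (localCoords P f g) D x :=
    (hasStrictFDerivAt_pi.2 fun i => hasStrictFDerivAt_eval _ x).prodMk R.hasStrictFDerivAt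
  rw [eval_det_submatrix_jacobian] at hx
  have hg := (injective_of_det_submatrix_ne_zero hx).2
  have hinj : Function.Injective D := by
    refine (injective_iff_map_eq_zero D).2 fun u hu => ?_
    have hoff : ∀ j ∉ Set.range g, u j = 0 := fun j hj =>
      congr_fun (congrArg Prod.snd hu) ⟨j, hj⟩
    have hrows : ((jacobian P).map (MvPolynomial.eval x)).submatrix f g *ᵥ (u ∘ g) = 0 := by
      ext i
      have hi : fderivEval (P (f i)) x u = 0 := congr_fun (congrArg Prod.fst hu) i
      rw [Pi.zero_apply, ← hi, fderivEval_eq_mulVec]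
      exact Fintype.sum_of_injective g hg _ _ (fun j hj => by simp [hoff j hj]) fun _ => rfl
    have hug := eq_zero_of_mulVec_eq_zero hx hrows
    funext j
    by_cases hj : j ∈ Set.range g
    · obtain ⟨i, rfl⟩ := hj
      exact congr_fun hug i
    · exact hoff j hj
  have hdim : Module.finrank ℝ (ι → ℝ) =
      Module.finrank ℝ ((Fin r → ℝ) × ({j // j ∉ Set.range g} → ℝ)) := by
    have := Fintype.card_le_of_injective g hg
    have hcompl : Fintype.card {j // j ∉ Set.range g} = Fintype.card ι - r := by
      rw [Fintype.card_subtype_compl, Set.card_range_of_injective hg, Fintype.card_fin]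
    simp only [Module.finrank_prod, Module.finrank_pi, hcompl, Fintype.card_fin] at this ⊢
    omega
  exact ⟨(LinearMap.linearEquivOfInjective D.toLinearMap hinj hdim).toContinuousLinearEquiv, hD⟩

theorem unidentifiable_of_card_lt [Fintype κ] (hcard : Fintype.card κ < Fintype.card ι) :
    Unidentifiable fun (θ : ι → ℝ) k => MvPolynomial.eval θ (P k) := by
  obtain ⟨r, f, g, hfg, hminor⟩ := (jacobian P).exists_maximal_nonzero_minor
  set U := {x | MvPolynomial.eval x ((jacobian P).submatrix f g).det ≠ 0}
  refine ⟨{x | MvPolynomial.eval x ((jacobian P).submatrix f g).det = 0},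
    volume_setOf_eval_eq_zero hfg, fun θ₀ (hθ₀ : θ₀ ∈ U) => ?_⟩
  obtain ⟨hf, hg⟩ := injective_of_det_submatrix_ne_zero hfg
  obtain ⟨d, hd⟩ : ∃ d, d ∉ Set.range g := by
    by_contra! h
    have := (Fintype.card_le_of_surjective g h).trans (Fintype.card_le_of_injective f hf)
    omega
  have hU : IsOpen U := isOpen_ne_fun (continuous_eval _) continuous_const
  obtain ⟨ε, hε, γ, hγ0, hγ⟩ := exists_curve_of_hasStrictFDerivAt hU
    (fun x hx => exists_hasStrictFDerivAt_localCoords P f g hx) hθ₀ (0, Pi.single ⟨d, hd⟩ 1)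
  have hfib : ∀ t ∈ Set.Ioo (-ε) ε, (∀ i, MvPolynomial.eval (γ t) (P (f i)) =
      MvPolynomial.eval θ₀ (P (f i))) ∧ γ t d = θ₀ d + t := by
    intro t ht
    have h := (hγ t ht).2.1
    simp only [localCoords, Prod.ext_iff] at h
    exact ⟨fun i => by simpa using congr_fun h.1 i, by simpa using congr_fun h.2 ⟨d, hd⟩⟩
  have hinj : Set.InjOn γ (Set.Ioo (-ε) ε) := fun s hs t ht hst => by
    have := (hfib s hs).2
    rw [hst, (hfib t ht).2] at this
    linarith
  refine ((Set.Ioo_infinite (by linarith)).image hinj).mono ?_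
  rintro _ ⟨t, ht, rfl⟩
  funext k
  rw [← hγ0]
  exact eval_eq_of_minors_of_eval_eq isOpen_Ioo isPreconnected_Ioo hminor
    (fun t ht => ⟨(hγ t ht).1, (hγ t ht).2.2, (hfib t ht).1⟩) ht ⟨by linarith, hε⟩ k

end MvPolynomial

theorem Unidentifiable.of_fiber_subset {P Q Q' : Type*} [MeasureSpace P] {c : P → Q}
    {c' : P → Q'} (h : Unidentifiable c) (hc : ∀ θ θ', c θ' = c θ → c' θ' = c' θ) :
    Unidentifiable c' := by
  obtain ⟨B, hB, hfib⟩ := h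
  exact ⟨B, hB, fun θ hθ => (hfib θ hθ).mono fun θ' => hc θ θ'⟩

namespace Matrix

variable {n m R : Type*} [Fintype n] [DecidableEq n] [Fintype m] [DecidableEq m] [CommRing R]

theorem coeff_det_charmatrix_submatrix_map {S : Type*} [CommRing S] (φ : R →+* S)
    (A : Matrix n n R) (e₁ e₂ : m → n) (k : ℕ) :
    ((charmatrix (A.map φ)).submatrix e₁ e₂).det.coeff k =
      φ (((charmatrix A).submatrix e₁ e₂).det.coeff k) := by
  rw [charmatrix_map, submatrix_map, ← Polynomial.coeff_map, ← Polynomial.coe_mapRingHom,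
    RingHom.map_det]
  rfl

theorem coeff_det_charmatrix_submatrix_card (A : Matrix n n R) (e₁ e₂ : m → n) :
    ((charmatrix A).submatrix e₁ e₂).det.coeff (Fintype.card m) =
      ((1 : Matrix n n R).submatrix e₁ e₂).det := by
  have h : (charmatrix A).submatrix e₁ e₂ =
      (X : R[X]) • ((1 : Matrix n n R).submatrix e₁ e₂).map C + (-A.submatrix e₁ e₂).map C := by
    ext i j
    by_cases hij : e₁ i = e₂ j <;> simp [one_apply, hij, sub_eq_add_neg]
  rw [h, coeff_det_X_add_C_card]

end Matrix

section Compartmental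

variable {n : ℕ} (E : Finset (Fin n × Fin n)) (Lk : Finset (Fin n))

def cmpMatrixPoly :
    Matrix (Fin n) (Fin n) (MvPolynomial ({e // e ∈ E} ⊕ {l // l ∈ Lk}) ℝ) :=
  fun i j =>
    if i = j then
      -((if h : j ∈ Lk then MvPolynomial.X (Sum.inr ⟨j, h⟩) else 0) +
        ∑ e ∈ E.attach, if (e : Fin n × Fin n).1 = j then MvPolynomial.X (Sum.inl e) else 0)
    else if h : (j, i) ∈ E then MvPolynomial.X (Sum.inl ⟨(j, i), h⟩) else 0

theorem cmpMatrixPoly_map_eval (θ : Params E Lk) :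
    (cmpMatrixPoly E Lk).map (MvPolynomial.eval θ) = cmpMatrixP E Lk θ := by
  ext i j
  simp only [cmpMatrixPoly, cmpMatrixP, Matrix.map_apply]
  split_ifs <;> simp [apply_ite (MvPolynomial.eval θ)]

end Compartmental

section CoeffMap

variable {m : ℕ} (E : Finset (Fin (m + 1) × Fin (m + 1))) (Lk : Finset (Fin (m + 1)))
  (inp outp : Fin (m + 1))

def coeffPoly :
    Fin (m + 1) ⊕ Fin (m + 1) → MvPolynomial ({e // e ∈ E} ⊕ {l // l ∈ Lk}) ℝ :=
  Sum.elim
    (fun k => (Matrix.charmatrix (cmpMatrixPoly E Lk)).det.coeff k)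
    (fun k => ((Matrix.charmatrix (cmpMatrixPoly E Lk)).submatrix
        inp.succAbove outp.succAbove).det.coeff k)

theorem coeffMap_eq_eval (θ : Params E Lk) (k : Fin (m + 1) ⊕ Fin (m + 1)) :
    coeffMap E Lk inp outp θ k = MvPolynomial.eval θ (coeffPoly E Lk inp outp k) := by
  rcases k with k | k <;> simp only [coeffMap, coeffPoly, Sum.elim_inl, Sum.elim_inr] <;>
    rw [← cmpMatrixPoly_map_eval E Lk θ]
  · simpa using Matrix.coeff_det_charmatrix_submatrix_map (MvPolynomial.eval θ) _ id id k
  · exact Matrix.coeff_det_charmatrix_submatrix_map _ _ _ _ _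

theorem coeffMap_inr_last (θ : Params E Lk) :
    coeffMap E Lk inp outp θ (Sum.inr (Fin.last m)) =
      ((1 : Matrix (Fin (m + 1)) (Fin (m + 1)) ℝ).submatrix inp.succAbove outp.succAbove).det := by
  simpa [coeffMap] using
    Matrix.coeff_det_charmatrix_submatrix_card (cmpMatrixP E Lk θ) inp.succAbove outp.succAbove

end CoeffMap

theorem card_bidirectional_cycle_edges (m : ℕ) :
    ((Finset.univ.image fun i : Fin (m + 3) => (i, i + 1)) ∪
      (Finset.univ.image fun i : Fin (m + 3) => (i + 1, i))).card = 2 * (m + 3) := by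
  rw [Finset.card_union_of_disjoint,
    Finset.card_image_of_injective _ fun a b h => (Prod.ext_iff.1 h).1,
    Finset.card_image_of_injective _ fun a b h => (Prod.ext_iff.1 h).2, Finset.card_univ,
    Fintype.card_fin, two_mul]
  simp only [Finset.disjoint_left, Finset.mem_image, Finset.mem_univ, true_and, not_exists]
  rintro _ ⟨i, rfl⟩ j h
  obtain ⟨h₁, h₂⟩ : j + 1 = i ∧ j = i + 1 := Prod.ext_iff.1 h
  rw [← h₁, add_assoc, left_eq_add] at h₂
  simp only [Fin.ext_iff, Fin.val_add, Fin.val_one, Fin.val_zero] at h₂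
  rw [Nat.mod_eq_of_lt (by omega)] at h₂
  omega

/-- Every linear compartmental model on the bidirectional cycle graph with
`n = m + 3 ≥ 3` vertices, with exactly one input and one output (and any leak set),
is unidentifiable. -/
theorem bidirectional_cycle_unidentifiable (m : ℕ)
    (E : Finset (Fin (m + 3) × Fin (m + 3)))
    (hE : E = (Finset.univ.image fun i : Fin (m + 3) => (i, i + 1)) ∪
              (Finset.univ.image fun i : Fin (m + 3) => (i + 1, i)))
    (inp outp : Fin (m + 3)) (Lk : Finset (Fin (m + 3))) :
    Unidentifiable (coeffMap E Lk inp outp) := by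
  let k₀ : Fin (m + 3) ⊕ Fin (m + 3) := Sum.inr (Fin.last (m + 2))
  have hcard : Fintype.card {k // k ≠ k₀} < Fintype.card ({e // e ∈ E} ⊕ {l // l ∈ Lk}) := by
    simp only [Fintype.card_subtype_compl, Fintype.card_sum, Fintype.card_fin,
      Fintype.card_subtype_eq, Fintype.card_coe, hE, card_bidirectional_cycle_edges]
    omega
  refine (MvPolynomial.unidentifiable_of_card_lt
    (fun k : {k // k ≠ k₀} => coeffPoly E Lk inp outp k) hcard).of_fiber_subset
    fun θ θ' h => funext fun k => ?_
  by_cases hk : k = k₀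
  · rw [hk, coeffMap_inr_last, coeffMap_inr_last]
  · simpa [coeffMap_eq_eval] using congr_fun h ⟨k, hk⟩
end
end

section
/- Let A be the compartmental matrix of a linear compartmental model M = (G, {1}, {1}, ∅) with n−1 compartments and no leaks, and let A* be the compartmental matrix of the model M' obtained by adding a leaf edge 1 ⇄ n (with labels a_{n1} for 1 → n and a_{1n} for n → 1). Then det(λI − A*) = λ·det(λI − A) + a_{1n}·det(λI − A) + a_{n1}·λ·det((λI − A)^{1,1}). -/
/-!
Away from the new compartment, `λI - A*` agrees with `λI - A` except for the extra `a_{n1}` in the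
`(1,1)` entry, while its last row and column vanish outside the entries `1` and `n`. Expanding along
the last column and then along the last row gives
`det(λI - A*) = (λ + a_{1n}) (det(λI - A) + a_{n1} det((λI - A)^{1,1})) - a_{1n} a_{n1} det((λI - A)^{1,1})`,
which rearranges to the claim.
-/

open scoped Classical
open Polynomial

/-- The compartmental matrix of a linear compartmental model with no leaks, with
edge set `E` (edge `(j,i)` means `j → i`, labeled `a i j`). -/
def cmpMatrixNL {n : ℕ} {R : Type*} [CommRing R] (E : Finset (Fin n × Fin n))
    (a : Fin n → Fin n → R) : Matrix (Fin n) (Fin n) R :=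
  fun i j =>
    if i = j then
      -(∑ k ∈ Finset.univ.filter (fun k => (j, k) ∈ E), a k j)
    else if (j, i) ∈ E then a i j else 0

/-- The compartmental matrix of the model obtained by adding a leaf edge `1 ⇄ n`
(here `0 ⇄ last`) to a no-leak model with compartmental matrix `A`: the new edges
are `1 → n` with label `a_{n1} = an1` and `n → 1` with label `a_{1n} = a1n`. -/
def leafExt {m : ℕ} {R : Type*} [CommRing R] (A : Matrix (Fin (m + 1)) (Fin (m + 1)) R)
    (a1n an1 : R) : Matrix (Fin (m + 2)) (Fin (m + 2)) R :=
  fun i j =>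
    if hi : i = Fin.last (m + 1) then
      (if j = (0 : Fin (m + 2)) then an1 else if j = Fin.last (m + 1) then -a1n else 0)
    else if hj : j = Fin.last (m + 1) then
      (if i = (0 : Fin (m + 2)) then a1n else 0)
    else
      A (i.castPred hi) (j.castPred hj) - (if i = 0 ∧ j = 0 then an1 else 0)

namespace Matrix

variable {R : Type*} [CommRing R]

theorem det_updateRow_zero_single {n : ℕ} (M : Matrix (Fin (n + 1)) (Fin (n + 1)) R) (c : R) :
    (M.updateRow 0 (Pi.single 0 c)).det = c * (M.submatrix Fin.succ Fin.succ).det := by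
  rw [det_succ_row_zero, Finset.sum_eq_single 0]
  · simp [← Fin.succAbove_zero]
  · intro j _ hj
    simp [hj]
  · simp

theorem det_add_single_zero_zero {n : ℕ} (M : Matrix (Fin (n + 1)) (Fin (n + 1)) R) (c : R) :
    (M + single 0 0 c).det = M.det + c * (M.submatrix Fin.succ Fin.succ).det := by
  have h : M + single 0 0 c = M.updateRow 0 (M 0 + Pi.single 0 c) := by
    ext i j
    rcases eq_or_ne i 0 with rfl | hi
    · rcases eq_or_ne j 0 with rfl | hj <;> simp [single, Ne.symm, *]
    · simp [hi, Ne.symm hi]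
  rw [h, det_updateRow_add, updateRow_eq_self, det_updateRow_zero_single]

theorem submatrix_succ_add_single_zero_zero {n : ℕ} (M : Matrix (Fin (n + 1)) (Fin (n + 1)) R)
    (c : R) : (M + single 0 0 c).submatrix Fin.succ Fin.succ = M.submatrix Fin.succ Fin.succ := by
  ext i j
  simp [single, (Fin.succ_ne_zero i).symm]

theorem det_eq_of_last_row_eq_zero {n : ℕ} (K : Matrix (Fin (n + 1)) (Fin (n + 1)) R)
    (h : ∀ j ≠ 0, K (Fin.last n) j = 0) :
    K.det = (-1) ^ n * K (Fin.last n) 0 * (K.submatrix Fin.castSucc Fin.succ).det := by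
  rw [det_succ_row K (Fin.last n), Finset.sum_eq_single 0]
  · simp
  · intro j _ hj
    simp [h j hj]
  · simp

theorem det_eq_of_last_col_eq_zero {n : ℕ} (N : Matrix (Fin (n + 2)) (Fin (n + 2)) R)
    (h : ∀ i, i ≠ 0 → i ≠ Fin.last (n + 1) → N i (Fin.last (n + 1)) = 0) :
    N.det = N (Fin.last (n + 1)) (Fin.last (n + 1)) * (N.submatrix Fin.castSucc Fin.castSucc).det
      - (-1) ^ n * N 0 (Fin.last (n + 1)) * (N.submatrix Fin.succ Fin.castSucc).det := by
  have h0 : (0 : Fin (n + 2)) ≠ Fin.last (n + 1) := Fin.last_pos.ne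
  rw [det_succ_column N (Fin.last (n + 1)), ← Finset.add_sum_erase _ _ (Finset.mem_univ 0),
    Finset.sum_eq_single_of_mem (Fin.last (n + 1)) (Finset.mem_erase.2 ⟨h0.symm, Finset.mem_univ _⟩)]
  · simp only [Fin.succAbove_zero, Fin.succAbove_last, Fin.val_zero, Fin.val_last, zero_add,
      ← two_mul, pow_mul, neg_one_sq, one_pow, pow_succ]
    ring
  · intro i hi hl
    simp [h i (Finset.mem_erase.1 hi).1 hl]

/-- Expand along the last column, then along the last row of the minor; the two signs `(-1) ^ n`
cancel. -/
theorem det_eq_of_last_row_col_eq_zero {n : ℕ} (N : Matrix (Fin (n + 2)) (Fin (n + 2)) R)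
    (hcol : ∀ i, i ≠ 0 → i ≠ Fin.last (n + 1) → N i (Fin.last (n + 1)) = 0)
    (hrow : ∀ j, j ≠ 0 → j ≠ Fin.last (n + 1) → N (Fin.last (n + 1)) j = 0) :
    N.det = N (Fin.last (n + 1)) (Fin.last (n + 1)) * (N.submatrix Fin.castSucc Fin.castSucc).det
      - N 0 (Fin.last (n + 1)) * N (Fin.last (n + 1)) 0 *
        ((N.submatrix Fin.castSucc Fin.castSucc).submatrix Fin.succ Fin.succ).det := by
  have hrow' : ∀ j ≠ 0, N.submatrix Fin.succ Fin.castSucc (Fin.last n) j = 0 := fun j hj =>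
    hrow _ (Fin.castSucc_ne_zero_iff.2 hj) (Fin.castSucc_ne_last j)
  rw [det_eq_of_last_col_eq_zero N hcol, det_eq_of_last_row_eq_zero _ hrow', submatrix_submatrix,
    submatrix_submatrix, submatrix_apply, Fin.succ_last, Fin.castSucc_zero]
  have hcomm : (Fin.succ ∘ Fin.castSucc : Fin n → Fin (n + 2)) = Fin.castSucc ∘ Fin.succ :=
    funext Fin.succ_castSucc
  have hsign : (-1 : R) ^ n * (-1) ^ n = 1 := by rw [← mul_pow, neg_one_mul, neg_neg, one_pow]
  rw [hcomm]
  linear_combination (-N 0 (Fin.last (n + 1)) * N (Fin.last (n + 1)) 0 *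
    (N.submatrix (Fin.castSucc ∘ Fin.succ) (Fin.castSucc ∘ Fin.succ)).det) * hsign

theorem charmatrix_submatrix {m n : Type*} [DecidableEq m] [DecidableEq n] [Fintype m]
    [Fintype n] (M : Matrix n n R) {e : m → n} (he : Function.Injective e) :
    charmatrix (M.submatrix e e) = (charmatrix M).submatrix e e := by
  ext i j
  rcases eq_or_ne i j with rfl | h
  · simp
  · simp [charmatrix_apply_ne _ _ _ h, charmatrix_apply_ne _ _ _ (he.ne h)]

theorem charmatrix_sub_single {n : Type*} [DecidableEq n] [Fintype n] (M : Matrix n n R)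
    (i : n) (c : R) : charmatrix (M - single i i c) = charmatrix M + single i i (C c) := by
  simp only [charmatrix, map_sub, RingHom.mapMatrix_apply, map_single]
  abel

end Matrix

open Matrix

section LeafExt

variable {R : Type*} [CommRing R] {m : ℕ} (A : Matrix (Fin (m + 1)) (Fin (m + 1)) R) (a1n an1 : R)

theorem leafExt_submatrix_castSucc :
    (leafExt A a1n an1).submatrix Fin.castSucc Fin.castSucc = A - single 0 0 an1 := by
  ext i j
  simp [leafExt, single, Fin.castSucc_ne_last, eq_comm]

theorem leafExt_castSucc_last (i : Fin (m + 1)) :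
    leafExt A a1n an1 i.castSucc (Fin.last (m + 1)) = if i = 0 then a1n else 0 := by
  simp [leafExt, Fin.castSucc_ne_last]

theorem leafExt_last_castSucc (j : Fin (m + 1)) :
    leafExt A a1n an1 (Fin.last (m + 1)) j.castSucc = if j = 0 then an1 else 0 := by
  simp [leafExt, Fin.castSucc_ne_last]

theorem leafExt_last_last : leafExt A a1n an1 (Fin.last (m + 1)) (Fin.last (m + 1)) = -a1n := by
  simp [leafExt]

theorem charmatrix_leafExt_submatrix_castSucc :
    (charmatrix (leafExt A a1n an1)).submatrix Fin.castSucc Fin.castSucc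
      = charmatrix A + single 0 0 (C an1) := by
  rw [← charmatrix_submatrix _ (Fin.castSucc_injective _), leafExt_submatrix_castSucc,
    charmatrix_sub_single]

theorem charmatrix_leafExt_apply_last {i : Fin (m + 2)} (h0 : i ≠ 0) (hl : i ≠ Fin.last (m + 1)) :
    charmatrix (leafExt A a1n an1) i (Fin.last (m + 1)) = 0 := by
  obtain ⟨i, rfl⟩ := Fin.exists_castSucc_eq.2 hl
  rw [charmatrix_apply_ne _ _ _ hl, leafExt_castSucc_last,
    if_neg (Fin.castSucc_ne_zero_iff.1 h0), map_zero, neg_zero]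

theorem charmatrix_leafExt_last_apply {j : Fin (m + 2)} (h0 : j ≠ 0) (hl : j ≠ Fin.last (m + 1)) :
    charmatrix (leafExt A a1n an1) (Fin.last (m + 1)) j = 0 := by
  obtain ⟨j, rfl⟩ := Fin.exists_castSucc_eq.2 hl
  rw [charmatrix_apply_ne _ _ _ hl.symm, leafExt_last_castSucc,
    if_neg (Fin.castSucc_ne_zero_iff.1 h0), map_zero, neg_zero]

theorem charmatrix_leafExt_zero_last :
    charmatrix (leafExt A a1n an1) 0 (Fin.last (m + 1)) = -C a1n := by
  rw [charmatrix_apply_ne _ _ _ Fin.last_pos.ne, ← Fin.castSucc_zero, leafExt_castSucc_last,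
    if_pos rfl]

theorem charmatrix_leafExt_last_zero :
    charmatrix (leafExt A a1n an1) (Fin.last (m + 1)) 0 = -C an1 := by
  rw [charmatrix_apply_ne _ _ _ Fin.last_pos.ne', ← Fin.castSucc_zero, leafExt_last_castSucc,
    if_pos rfl]

theorem charmatrix_leafExt_last_last :
    charmatrix (leafExt A a1n an1) (Fin.last (m + 1)) (Fin.last (m + 1)) = X + C a1n := by
  rw [charmatrix_apply_eq, leafExt_last_last, map_neg, sub_neg_eq_add]

end LeafExt

theorem charmatrix_det_leafExt_general {R : Type*} [CommRing R] (m : ℕ)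
    (a1n an1 : R)
    (A : Matrix (Fin (m + 1)) (Fin (m + 1)) R) :
    (Matrix.charmatrix (leafExt A a1n an1)).det
      = X * (Matrix.charmatrix A).det + C a1n * (Matrix.charmatrix A).det +
        C an1 * X * ((Matrix.charmatrix A).submatrix
          (Fin.succAbove 0) (Fin.succAbove 0)).det := by
  rw [det_eq_of_last_row_col_eq_zero _ (fun _ => charmatrix_leafExt_apply_last A a1n an1)
      (fun _ => charmatrix_leafExt_last_apply A a1n an1),
    charmatrix_leafExt_submatrix_castSucc, det_add_single_zero_zero,
    submatrix_succ_add_single_zero_zero, charmatrix_leafExt_last_last,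
    charmatrix_leafExt_zero_last, charmatrix_leafExt_last_zero, Fin.succAbove_zero]
  ring

/-- Adding a leaf edge `1 ⇄ n` to a no-leak model with compartmental matrix `A`
yields a model with compartmental matrix `A*` satisfying
`det(λI - A*) = λ·det(λI - A) + a_{1n}·det(λI - A) + a_{n1}·λ·det((λI - A)^{1,1})`. -/
theorem charmatrix_det_leafExt {R : Type*} [CommRing R] (m : ℕ)
    (E : Finset (Fin (m + 1) × Fin (m + 1))) (hloop : ∀ e ∈ E, e.1 ≠ e.2)
    (a : Fin (m + 1) → Fin (m + 1) → R) (a1n an1 : R)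
    (A : Matrix (Fin (m + 1)) (Fin (m + 1)) R) (hA : A = cmpMatrixNL E a) :
    (Matrix.charmatrix (leafExt A a1n an1)).det
      = X * (Matrix.charmatrix A).det + C a1n * (Matrix.charmatrix A).det +
        C an1 * X * ((Matrix.charmatrix A).submatrix
          (Fin.succAbove 0) (Fin.succAbove 0)).det :=
  charmatrix_det_leafExt_general m a1n an1 A
end

section
/- With A and A* as in the leaf-edge construction (A* the compartmental matrix of the model obtained by adding a leaf edge 1 ⇄ n to a no-leak model with matrix A), the determinant of (λI − A*) with row 1 and column n deleted equals (−1)^{n−1} a_{n1} det((λI − A)^{1,1}), and the determinant of (λI − A*) with row n and column 1 deleted equals (−1)^{n−1} a_{1n} det((λI − A)^{1,1}). -/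
open scoped Classical
open Polynomial

/-!
In both minors the last compartment contributes a line (the last row of the first minor, the
last column of the second) whose only nonzero entry, `-a_{n1}` resp. `-a_{1n}`, sits in the
position of compartment 1. Laplace expansion along that line leaves the minor of `λI - A*` on
compartments `2, …, n-1`, where `A*` agrees with `A`.
-/

namespace Matrix

variable {R : Type*} [CommRing R] {n : ℕ}

theorem det_eq_of_row_eq_zero_of_ne (M : Matrix (Fin (n + 1)) (Fin (n + 1)) R)
    (i j : Fin (n + 1)) (h : ∀ k, k ≠ j → M i k = 0) :
    M.det = (-1) ^ (i + j : ℕ) * M i j * (M.submatrix i.succAbove j.succAbove).det := by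
  rw [det_succ_row M i,
    Finset.sum_eq_single j (fun k _ hk => by rw [h k hk, mul_zero, zero_mul]) (by simp)]

theorem det_eq_of_col_eq_zero_of_ne (M : Matrix (Fin (n + 1)) (Fin (n + 1)) R)
    (i j : Fin (n + 1)) (h : ∀ k, k ≠ i → M k j = 0) :
    M.det = (-1) ^ (i + j : ℕ) * M i j * (M.submatrix i.succAbove j.succAbove).det := by
  rw [det_succ_column M j,
    Finset.sum_eq_single i (fun k _ hk => by rw [h k hk, mul_zero, zero_mul]) (by simp)]

end Matrix

section LeafExt

variable {R : Type*} [CommRing R] {m : ℕ} (A : Matrix (Fin (m + 1)) (Fin (m + 1)) R)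
  (a1n an1 : R)

theorem charmatrix_leafExt_last_castSucc (j : Fin (m + 1)) :
    (leafExt A a1n an1).charmatrix (Fin.last (m + 1)) j.castSucc =
      if j = 0 then -C an1 else 0 := by
  rw [Matrix.charmatrix_apply_ne _ _ _ (Fin.castSucc_lt_last j).ne']
  by_cases hj : j = 0 <;> simp [leafExt, hj, (Fin.castSucc_lt_last j).ne]

theorem charmatrix_leafExt_castSucc_last (i : Fin (m + 1)) :
    (leafExt A a1n an1).charmatrix i.castSucc (Fin.last (m + 1)) =
      if i = 0 then -C a1n else 0 := by
  rw [Matrix.charmatrix_apply_ne _ _ _ (Fin.castSucc_lt_last i).ne]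
  by_cases hi : i = 0 <;> simp [leafExt, hi, (Fin.castSucc_lt_last i).ne]

theorem charmatrix_leafExt_submatrix_succ_castSucc :
    (leafExt A a1n an1).charmatrix.submatrix (fun i : Fin m ↦ i.succ.castSucc)
      (fun j ↦ j.succ.castSucc) = A.charmatrix.submatrix Fin.succ Fin.succ := by
  ext i j
  have hentry : leafExt A a1n an1 i.succ.castSucc j.succ.castSucc = A i.succ j.succ := by
    simp only [leafExt, dif_neg (Fin.castSucc_lt_last _).ne, Fin.castPred_castSucc,
      Fin.castSucc_eq_zero_iff, Fin.succ_ne_zero, false_and, if_false, sub_zero]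
  simp only [Matrix.submatrix_apply, Matrix.charmatrix_apply, hentry, Matrix.diagonal_apply,
    Fin.castSucc_inj]

end LeafExt

theorem charmatrix_minor_leafExt_general {R : Type*} [CommRing R] (m : ℕ)
    (a1n an1 : R) (A : Matrix (Fin (m + 1)) (Fin (m + 1)) R) :
    ((Matrix.charmatrix (leafExt A a1n an1)).submatrix
        (Fin.succAbove (0 : Fin (m + 2))) (Fin.succAbove (Fin.last (m + 1)))).det
      = (-1 : Polynomial R) ^ (m + 1) * C an1 *
        ((Matrix.charmatrix A).submatrix
          (Fin.succAbove (0 : Fin (m + 1))) (Fin.succAbove (0 : Fin (m + 1)))).det ∧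
    ((Matrix.charmatrix (leafExt A a1n an1)).submatrix
        (Fin.succAbove (Fin.last (m + 1))) (Fin.succAbove (0 : Fin (m + 2)))).det
      = (-1 : Polynomial R) ^ (m + 1) * C a1n *
        ((Matrix.charmatrix A).submatrix
          (Fin.succAbove (0 : Fin (m + 1))) (Fin.succAbove (0 : Fin (m + 1)))).det := by
  simp only [Fin.succAbove_zero, Fin.succAbove_last]
  constructor
  · rw [Matrix.det_eq_of_row_eq_zero_of_ne _ (Fin.last m) 0 fun k hk => ?_]
    · simp only [Matrix.submatrix_apply, Matrix.submatrix_submatrix, Fin.succ_last,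
        Fin.succAbove_last, Fin.succAbove_zero, charmatrix_leafExt_last_castSucc,
        Function.comp_def, Fin.succ_castSucc, charmatrix_leafExt_submatrix_succ_castSucc, if_true,
        Fin.val_last, Fin.val_zero]
      ring
    · simp only [Matrix.submatrix_apply, Fin.succ_last, charmatrix_leafExt_last_castSucc,
        if_neg hk]
  · rw [Matrix.det_eq_of_col_eq_zero_of_ne _ 0 (Fin.last m) fun k hk => ?_]
    · simp only [Matrix.submatrix_apply, Matrix.submatrix_submatrix, Fin.succ_last,
        Fin.succAbove_last, Fin.succAbove_zero, charmatrix_leafExt_castSucc_last,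
        Function.comp_def, Fin.succ_castSucc, charmatrix_leafExt_submatrix_succ_castSucc, if_true,
        Fin.val_last, Fin.val_zero]
      ring
    · simp only [Matrix.submatrix_apply, Fin.succ_last, charmatrix_leafExt_castSucc_last,
        if_neg hk]

/-- With `A*` the compartmental matrix of the model obtained by adding a leaf edge
`1 ⇄ n` (here `0 ⇄ last`) to a no-leak model with compartmental matrix `A`:
`det((λI - A*)^{1,n}) = (-1)^{n-1} a_{n1} det((λI - A)^{1,1})` and
`det((λI - A*)^{n,1}) = (-1)^{n-1} a_{1n} det((λI - A)^{1,1})`, where `n = m + 2`. -/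
theorem charmatrix_minor_leafExt {R : Type*} [CommRing R] (m : ℕ)
    (E : Finset (Fin (m + 1) × Fin (m + 1))) (hloop : ∀ e ∈ E, e.1 ≠ e.2)
    (a : Fin (m + 1) → Fin (m + 1) → R) (a1n an1 : R)
    (A : Matrix (Fin (m + 1)) (Fin (m + 1)) R) (hA : A = cmpMatrixNL E a) :
    ((Matrix.charmatrix (leafExt A a1n an1)).submatrix
        (Fin.succAbove (0 : Fin (m + 2))) (Fin.succAbove (Fin.last (m + 1)))).det
      = (-1 : Polynomial R) ^ (m + 1) * C an1 *
        ((Matrix.charmatrix A).submatrix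
          (Fin.succAbove (0 : Fin (m + 1))) (Fin.succAbove (0 : Fin (m + 1)))).det ∧
    ((Matrix.charmatrix (leafExt A a1n an1)).submatrix
        (Fin.succAbove (Fin.last (m + 1))) (Fin.succAbove (0 : Fin (m + 2)))).det
      = (-1 : Polynomial R) ^ (m + 1) * C a1n *
        ((Matrix.charmatrix A).submatrix
          (Fin.succAbove (0 : Fin (m + 1))) (Fin.succAbove (0 : Fin (m + 1)))).det :=
  charmatrix_minor_leafExt_general m a1n an1 A
end
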